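/- arXiv:2508.20548 — 4 statements merged into one kernel-verified Lean document; each statement's English description precedes it below -/
import Mathlib

section
/- Let p be a prime, n ≥ 1, α > 0, N ∈ ℤ, Ω = B_N, and let ρ ∈ L¹(Ω^c) be measurable. Then H^α_ρ(Ω) is a real Hilbert space with the inner product (u,v) = ∫_Ω u v dx + ∫_{Ω^c} |ρ| u v dx + ∬_{(K^n×K^n)∖(Ω^c×Ω^c)} (u(x)−u(y))(v(x)−v(y))/‖x−y‖^{n+α} dx dy; in particular, every sequence (u_k) of measurable functions K^n → ℝ with ‖u_k‖_{H^α_ρ(Ω)} < ∞ that is Cauchy with respect to ‖·‖_{H^α_ρ(Ω)} converges in this norm to some measurable u : K^n → ℝ with ‖u‖_{H^α_ρ(Ω)} < ∞ (functions equal almost everywhere being identified). -/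
noncomputable section

open MeasureTheory Metric ENNReal

instance (p : ℕ) [Fact p.Prime] : MeasurableSpace ℚ_[p] := borel _
instance (p : ℕ) [Fact p.Prime] : BorelSpace ℚ_[p] := ⟨rfl⟩

/-- The closed unit ball `ℤ_p ⊆ ℚ_p` as a positive compact set. -/
def padicUnitBall (p : ℕ) [Fact p.Prime] : TopologicalSpace.PositiveCompacts ℚ_[p] where
  carrier := Metric.closedBall 0 1
  isCompact' := isCompact_closedBall 0 1
  interior_nonempty' := by
    rw [IsOpen.interior_eq (IsUltrametricDist.isOpen_closedBall 0 one_ne_zero)]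
    exact ⟨0, Metric.mem_closedBall_self zero_le_one⟩

/-- Additive Haar measure on `ℚ_p`, normalized so that `ℤ_p` has measure `1`. -/
def padicHaar (p : ℕ) [Fact p.Prime] : Measure ℚ_[p] :=
  Measure.addHaarMeasure (padicUnitBall p)

/-- The product Haar measure on `K^n = ℚ_p^n`, normalized so that `ℤ_p^n` has measure `1`. -/
def padicHaarN (p : ℕ) [Fact p.Prime] (n : ℕ) : Measure (Fin n → ℚ_[p]) :=
  Measure.pi fun _ => padicHaar p

/-- The ball `B_N = {x ∈ K^n : ‖x‖ ≤ p^N}`, where `‖x‖ = max |x_j|_p` is the sup norm. -/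
def Bball (p : ℕ) [Fact p.Prime] (n : ℕ) (N : ℤ) : Set (Fin n → ℚ_[p]) :=
  {x | ‖x‖ ≤ (p : ℝ) ^ N}

/-- The constant `c_{n,α} = (p^α − 1)/(1 − p^{−α−n})`. -/
def cna (p n : ℕ) (α : ℝ) : ℝ := ((p : ℝ) ^ α - 1) / (1 - (p : ℝ) ^ (-α - (n : ℝ)))

/-- The Vladimirov–Taibleson operator `(D^{α,n}u)(x) = c_{n,α} ∫ (u(x)−u(y))/‖x−y‖^{n+α} dy`. -/
def Dop (p : ℕ) [Fact p.Prime] (n : ℕ) (α : ℝ) (u : (Fin n → ℚ_[p]) → ℝ)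
    (x : Fin n → ℚ_[p]) : ℝ :=
  cna p n α * ∫ y, (u x - u y) / ‖x - y‖ ^ ((n : ℝ) + α) ∂padicHaarN p n

/-- The nonlocal normal derivative `(N_α u)(x) = c_{n,α} ∫_Ω (u(x)−u(y))/‖x−y‖^{n+α} dy`. -/
def Nop (p : ℕ) [Fact p.Prime] (n : ℕ) (α : ℝ) (N : ℤ) (u : (Fin n → ℚ_[p]) → ℝ)
    (x : Fin n → ℚ_[p]) : ℝ :=
  cna p n α * ∫ y in Bball p n N, (u x - u y) / ‖x - y‖ ^ ((n : ℝ) + α) ∂padicHaarN p n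

/-- The squared norm of the space `H^α_ρ(Ω)`, `Ω = B_N` (value in `[0,∞]`). -/
def normSqH (p : ℕ) [Fact p.Prime] (n : ℕ) (α : ℝ) (N : ℤ)
    (ρ u : (Fin n → ℚ_[p]) → ℝ) : ℝ≥0∞ :=
  (∫⁻ x in Bball p n N, ENNReal.ofReal ((u x) ^ 2) ∂padicHaarN p n)
  + (∫⁻ x in (Bball p n N)ᶜ, ENNReal.ofReal (|ρ x| * (u x) ^ 2) ∂padicHaarN p n)
  + ∫⁻ z in ((Bball p n N)ᶜ ×ˢ (Bball p n N)ᶜ)ᶜ,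
      ENNReal.ofReal ((u z.1 - u z.2) ^ 2 / ‖z.1 - z.2‖ ^ ((n : ℝ) + α))
      ∂((padicHaarN p n).prod (padicHaarN p n))

/-- Membership in `H^α_ρ(Ω)`: measurable with finite `H^α_ρ(Ω)`-norm. -/
def MemH (p : ℕ) [Fact p.Prime] (n : ℕ) (α : ℝ) (N : ℤ)
    (ρ u : (Fin n → ℚ_[p]) → ℝ) : Prop :=
  Measurable u ∧ normSqH p n α N ρ u < ⊤

/-- `u` is a weak solution of the Neumann problem `D^{α,n}u = f` on `Ω`,
`N_α u = g` on `Ω^c`, where `Ω = B_N`. -/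
def IsWeakSolution (p : ℕ) [Fact p.Prime] (n : ℕ) (α : ℝ) (N : ℤ)
    (f g u : (Fin n → ℚ_[p]) → ℝ) : Prop :=
  MemH p n α N g u ∧
  ∀ v : (Fin n → ℚ_[p]) → ℝ, MemH p n α N g v →
    cna p n α / 2 *
      ∫ z in ((Bball p n N)ᶜ ×ˢ (Bball p n N)ᶜ)ᶜ,
        (u z.1 - u z.2) * (v z.1 - v z.2) / ‖z.1 - z.2‖ ^ ((n : ℝ) + α)
        ∂((padicHaarN p n).prod (padicHaarN p n))
    = (∫ x in Bball p n N, f x * v x ∂padicHaarN p n)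
      + ∫ y in (Bball p n N)ᶜ, g y * v y ∂padicHaarN p n

open Filter Topology

/-! ### Auxiliary instances -/

instance (p : ℕ) [Fact p.Prime] : SigmaFinite (padicHaar p) := by
  unfold padicHaar; infer_instance
instance (p : ℕ) [Fact p.Prime] : (padicHaar p).IsOpenPosMeasure := by
  unfold padicHaar; infer_instance
instance (p : ℕ) [Fact p.Prime] : IsFiniteMeasureOnCompacts (padicHaar p) := by
  unfold padicHaar; infer_instance
instance (p : ℕ) [Fact p.Prime] (n : ℕ) : SigmaFinite (padicHaarN p n) := by
  unfold padicHaarN; infer_instance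
instance (p : ℕ) [Fact p.Prime] (n : ℕ) : (padicHaarN p n).IsOpenPosMeasure := by
  unfold padicHaarN; infer_instance
instance (p : ℕ) [Fact p.Prime] (n : ℕ) : IsFiniteMeasureOnCompacts (padicHaarN p n) := by
  unfold padicHaarN; infer_instance

section Aux

variable {p : ℕ} [Fact p.Prime] {n : ℕ} {α : ℝ} {N : ℤ}

lemma Bball_eq : Bball p n N = Metric.closedBall (0 : Fin n → ℚ_[p]) ((p:ℝ)^N) := by
  ext x; simp [Bball, Metric.mem_closedBall, dist_eq_norm]

lemma measurableSet_Bball : MeasurableSet (Bball p n N) := by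
  rw [Bball_eq]; exact measurableSet_closedBall

lemma Bball_pos : 0 < padicHaarN p n (Bball p n N) := by
  have hp : (0:ℝ) < (p:ℝ)^N := by
    have : (0:ℝ) < (p:ℝ) := by exact_mod_cast (Fact.out : p.Prime).pos
    positivity
  rw [Bball_eq]
  exact lt_of_lt_of_le
    (Metric.isOpen_ball.measure_pos _ (Metric.nonempty_ball.2 hp))
    (measure_mono Metric.ball_subset_closedBall)

lemma Bball_lt_top : padicHaarN p n (Bball p n N) < ⊤ := by
  rw [Bball_eq]
  exact (isCompact_closedBall _ _).measure_lt_top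

lemma sq_ofReal_le (x y z : ℝ) (hy : 0 ≤ y) (hz : 0 ≤ z) (h : x ≤ 2*y + 2*z) :
    ENNReal.ofReal x ≤ 2 * ENNReal.ofReal y + 2 * ENNReal.ofReal z := by
  calc ENNReal.ofReal x ≤ ENNReal.ofReal (2*y + 2*z) := ENNReal.ofReal_le_ofReal h
  _ = 2 * ENNReal.ofReal y + 2 * ENNReal.ofReal z := by
      rw [ENNReal.ofReal_add (by positivity) (by positivity),
        ENNReal.ofReal_mul (by norm_num : (0:ℝ) ≤ 2),
        ENNReal.ofReal_mul (by norm_num : (0:ℝ) ≤ 2), ENNReal.ofReal_ofNat]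

lemma div_sq_le (a b c : ℝ) (hc : 0 ≤ c) : (a-b)^2/c ≤ 2*(a^2/c) + 2*(b^2/c) := by
  rcases eq_or_lt_of_le hc with h|h
  · simp [← h]
  · rw [← mul_div_assoc, ← mul_div_assoc, ← add_div, div_le_div_iff_of_pos_right h]
    nlinarith [sq_nonneg (a+b)]

lemma measurable_kernel (hc : 0 ≤ (n:ℝ)+α) (d : (Fin n → ℚ_[p]) → ℝ) (hd : Measurable d) :
    Measurable fun z : (Fin n → ℚ_[p]) × (Fin n → ℚ_[p]) =>
      ENNReal.ofReal ((d z.1 - d z.2)^2 / ‖z.1 - z.2‖ ^ ((n:ℝ)+α)) := by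
  apply Measurable.ennreal_ofReal
  exact (((hd.comp measurable_fst).sub (hd.comp measurable_snd)).pow_const 2).div
    ((Real.continuous_rpow_const hc).comp
      (continuous_fst.sub continuous_snd).norm).measurable

/-- quasi-subadditivity of `normSqH` under subtraction -/
lemma normSqH_sub_le (hc : 0 ≤ (n:ℝ)+α) (ρ f g : (Fin n → ℚ_[p]) → ℝ)
    (hρ : Measurable ρ) (hf : Measurable f) (hg : Measurable g) :
    normSqH p n α N ρ (f - g) ≤ 2 * normSqH p n α N ρ f + 2 * normSqH p n α N ρ g := by
  have h1 : (∫⁻ x in Bball p n N, ENNReal.ofReal (((f-g) x) ^ 2) ∂padicHaarN p n)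
      ≤ 2 * (∫⁻ x in Bball p n N, ENNReal.ofReal ((f x) ^ 2) ∂padicHaarN p n)
        + 2 * (∫⁻ x in Bball p n N, ENNReal.ofReal ((g x) ^ 2) ∂padicHaarN p n) := by
    calc (∫⁻ x in Bball p n N, ENNReal.ofReal (((f-g) x) ^ 2) ∂padicHaarN p n)
        ≤ ∫⁻ x in Bball p n N,
            (2 * ENNReal.ofReal ((f x)^2) + 2 * ENNReal.ofReal ((g x)^2)) ∂padicHaarN p n := by
          refine lintegral_mono fun x => ?_
          exact sq_ofReal_le _ _ _ (sq_nonneg _) (sq_nonneg _)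
            (by simp only [Pi.sub_apply]; nlinarith [sq_nonneg (f x + g x)])
      _ = _ := by
          rw [lintegral_add_left (((hf.pow_const 2).ennreal_ofReal).const_mul 2),
            lintegral_const_mul' 2 _ ENNReal.ofNat_ne_top,
            lintegral_const_mul' 2 _ ENNReal.ofNat_ne_top]
  have h2 : (∫⁻ x in (Bball p n N)ᶜ, ENNReal.ofReal (|ρ x| * ((f-g) x) ^ 2) ∂padicHaarN p n)
      ≤ 2 * (∫⁻ x in (Bball p n N)ᶜ, ENNReal.ofReal (|ρ x| * (f x) ^ 2) ∂padicHaarN p n)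
        + 2 * (∫⁻ x in (Bball p n N)ᶜ, ENNReal.ofReal (|ρ x| * (g x) ^ 2) ∂padicHaarN p n) := by
    calc (∫⁻ x in (Bball p n N)ᶜ, ENNReal.ofReal (|ρ x| * ((f-g) x) ^ 2) ∂padicHaarN p n)
        ≤ ∫⁻ x in (Bball p n N)ᶜ, (2 * ENNReal.ofReal (|ρ x| * (f x)^2)
            + 2 * ENNReal.ofReal (|ρ x| * (g x)^2)) ∂padicHaarN p n := by
          refine lintegral_mono fun x => ?_
          refine sq_ofReal_le _ _ _ (by positivity) (by positivity) ?_
          simp only [Pi.sub_apply]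
          nlinarith [mul_nonneg (abs_nonneg (ρ x)) (sq_nonneg (f x + g x))]
      _ = _ := by
          rw [lintegral_add_left (f := fun x => 2 * ENNReal.ofReal (|ρ x| * f x ^ 2)) ((hρ.abs.mul (hf.pow_const 2)).ennreal_ofReal.const_mul 2),
            lintegral_const_mul' 2 _ ENNReal.ofNat_ne_top,
            lintegral_const_mul' 2 _ ENNReal.ofNat_ne_top]
  have h3 : (∫⁻ z in ((Bball p n N)ᶜ ×ˢ (Bball p n N)ᶜ)ᶜ,
        ENNReal.ofReal (((f-g) z.1 - (f-g) z.2) ^ 2 / ‖z.1 - z.2‖ ^ ((n : ℝ) + α))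
        ∂((padicHaarN p n).prod (padicHaarN p n)))
      ≤ 2 * (∫⁻ z in ((Bball p n N)ᶜ ×ˢ (Bball p n N)ᶜ)ᶜ,
          ENNReal.ofReal ((f z.1 - f z.2) ^ 2 / ‖z.1 - z.2‖ ^ ((n : ℝ) + α))
          ∂((padicHaarN p n).prod (padicHaarN p n)))
        + 2 * (∫⁻ z in ((Bball p n N)ᶜ ×ˢ (Bball p n N)ᶜ)ᶜ,
          ENNReal.ofReal ((g z.1 - g z.2) ^ 2 / ‖z.1 - z.2‖ ^ ((n : ℝ) + α))
          ∂((padicHaarN p n).prod (padicHaarN p n))) := by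
    calc _ ≤ ∫⁻ z in ((Bball p n N)ᶜ ×ˢ (Bball p n N)ᶜ)ᶜ,
          (2 * ENNReal.ofReal ((f z.1 - f z.2) ^ 2 / ‖z.1 - z.2‖ ^ ((n : ℝ) + α))
            + 2 * ENNReal.ofReal ((g z.1 - g z.2) ^ 2 / ‖z.1 - z.2‖ ^ ((n : ℝ) + α)))
          ∂((padicHaarN p n).prod (padicHaarN p n)) := by
          refine lintegral_mono fun z => ?_
          refine sq_ofReal_le _ _ _ (by positivity) (by positivity) ?_
          have := div_sq_le (f z.1 - f z.2) (g z.1 - g z.2) (‖z.1 - z.2‖ ^ ((n : ℝ) + α))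
            (Real.rpow_nonneg (norm_nonneg _) _)
          simpa only [Pi.sub_apply, show ∀ a b c d : ℝ, (a - b) - (c - d) = (a-c)-(b-d) from
            fun a b c d => by ring] using this
      _ = _ := by
          rw [lintegral_add_left ((measurable_kernel hc f hf).const_mul 2),
            lintegral_const_mul' 2 _ ENNReal.ofNat_ne_top,
            lintegral_const_mul' 2 _ ENNReal.ofNat_ne_top]
  calc normSqH p n α N ρ (f - g) ≤ _ := add_le_add (add_le_add h1 h2) h3
  _ = 2 * normSqH p n α N ρ f + 2 * normSqH p n α N ρ g := by
      unfold normSqH; ring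

end Aux

section Aux2

variable {p : ℕ} [Fact p.Prime] {n : ℕ} {α : ℝ} {N : ℤ}

lemma lintegral_le_liminf {β : Type*} [MeasurableSpace β] (ν : Measure β)
    (F : ℕ → β → ℝ≥0∞) (hF : ∀ j, Measurable (F j)) (G : β → ℝ≥0∞)
    (h : ∀ᵐ x ∂ν, Tendsto (fun j => F j x) atTop (𝓝 (G x))) :
    ∫⁻ x, G x ∂ν ≤ liminf (fun j => ∫⁻ x, F j x ∂ν) atTop := by
  have heq : ∫⁻ x, G x ∂ν = ∫⁻ x, liminf (fun j => F j x) atTop ∂ν :=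
    lintegral_congr_ae (h.mono fun x hx => hx.liminf_eq.symm)
  rw [heq]; exact lintegral_liminf_le hF

/-- Fatou-type bound for `normSqH` along an a.e. convergent sequence. -/
lemma fatou_normSqH (hc : 0 ≤ (n:ℝ)+α) (ρ : (Fin n → ℚ_[p]) → ℝ) (hρ : Measurable ρ)
    (d : ℕ → (Fin n → ℚ_[p]) → ℝ) (hd : ∀ j, Measurable (d j)) (d' : (Fin n → ℚ_[p]) → ℝ)
    (h : ∀ᵐ x ∂padicHaarN p n, Tendsto (fun j => d j x) atTop (𝓝 (d' x)))
    (ε : ℝ≥0∞) (hb : ∀ᶠ j in atTop, normSqH p n α N ρ (d j) ≤ ε) :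
    normSqH p n α N ρ d' ≤ 3 * ε := by
  classical
  set μ := padicHaarN p n with hμdef
  -- measurable co-null set of convergence
  set E : Set (Fin n → ℚ_[p]) :=
    toMeasurable μ {x | ¬ Tendsto (fun j => d j x) atTop (𝓝 (d' x))} with hEdef
  have hE0 : μ E = 0 := by
    rw [hEdef, measure_toMeasurable]
    exact h
  have hG : ∀ x ∉ E, Tendsto (fun j => d j x) atTop (𝓝 (d' x)) := by
    intro x hx
    by_contra hcon
    exact hx (subset_toMeasurable _ _ hcon)
  -- liminf bounds ε for each term
  have hlim : ∀ (t : ℕ → ℝ≥0∞), (∀ᶠ j in atTop, t j ≤ normSqH p n α N ρ (d j)) →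
      liminf t atTop ≤ ε := by
    intro t ht
    calc liminf t atTop ≤ liminf (fun _ => ε) atTop :=
          liminf_le_liminf ((ht.and hb).mono fun j hj => hj.1.trans hj.2)
    _ = ε := liminf_const ε
  -- term 1
  have h1 : (∫⁻ x in Bball p n N, ENNReal.ofReal ((d' x) ^ 2) ∂μ) ≤ ε := by
    refine le_trans (lintegral_le_liminf _ (fun j x => ENNReal.ofReal ((d j x)^2))
      (fun j => ((hd j).pow_const 2).ennreal_ofReal) _ ?_) (hlim _ ?_)
    · exact ae_restrict_of_ae (h.mono fun x hx =>
        (ENNReal.continuous_ofReal.tendsto _).comp (hx.pow 2))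
    · exact Eventually.of_forall fun j => le_add_right (le_add_right le_rfl)
  -- term 2
  have h2 : (∫⁻ x in (Bball p n N)ᶜ, ENNReal.ofReal (|ρ x| * (d' x) ^ 2) ∂μ) ≤ ε := by
    refine le_trans (lintegral_le_liminf _ (fun j x => ENNReal.ofReal (|ρ x| * (d j x)^2))
      (fun j => (hρ.abs.mul ((hd j).pow_const 2)).ennreal_ofReal) _ ?_) (hlim _ ?_)
    · exact ae_restrict_of_ae (h.mono fun x hx =>
        (ENNReal.continuous_ofReal.tendsto _).comp ((hx.pow 2).const_mul _))
    · exact Eventually.of_forall fun j => le_add_right (self_le_add_left _ _)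
  -- term 3
  have h3 : (∫⁻ z in ((Bball p n N)ᶜ ×ˢ (Bball p n N)ᶜ)ᶜ,
      ENNReal.ofReal ((d' z.1 - d' z.2) ^ 2 / ‖z.1 - z.2‖ ^ ((n : ℝ) + α)) ∂(μ.prod μ)) ≤ ε := by
    have hprod : ∀ᵐ z ∂(μ.prod μ), z.1 ∉ E ∧ z.2 ∉ E := by
      have hEm : MeasurableSet E := measurableSet_toMeasurable _ _
      have hu1 : (μ.prod μ) (E ×ˢ (Set.univ : Set (Fin n → ℚ_[p]))) = 0 := by
        rw [Measure.prod_prod, hE0, zero_mul]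
      have hu2 : (μ.prod μ) ((Set.univ : Set (Fin n → ℚ_[p])) ×ˢ E) = 0 := by
        rw [Measure.prod_prod, hE0, mul_zero]
      refine ae_iff.2 (measure_mono_null ?_ (measure_union_null hu1 hu2))
      intro z hz
      simp only [Set.mem_setOf_eq, not_and_or, not_not] at hz
      rcases hz with hz | hz
      · exact Or.inl (by simp [hz])
      · exact Or.inr (by simp [hz])
    refine le_trans (lintegral_le_liminf _
      (fun j z => ENNReal.ofReal ((d j z.1 - d j z.2) ^ 2 / ‖z.1 - z.2‖ ^ ((n : ℝ) + α)))
      (fun j => measurable_kernel hc (d j) (hd j)) _ ?_) (hlim _ ?_)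
    · refine ae_restrict_of_ae (hprod.mono fun z hz => ?_)
      exact (ENNReal.continuous_ofReal.tendsto _).comp
        ((((hG z.1 hz.1).sub (hG z.2 hz.2)).pow 2).div_const _)
    · exact Eventually.of_forall fun j => self_le_add_left _ _
  calc normSqH p n α N ρ d' ≤ ε + ε + ε := add_le_add (add_le_add h1 h2) h3
  _ = 3 * ε := by ring

end Aux2

section Key

variable {p : ℕ} [Fact p.Prime] {n : ℕ} {α : ℝ} {N : ℤ}

/-- The weight `(2‖x‖)^{-(n+α)}` as an extended real. -/
def Wf (p : ℕ) [Fact p.Prime] (n : ℕ) (α : ℝ) (x : Fin n → ℚ_[p]) : ℝ≥0∞ :=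
  (ENNReal.ofReal ((2*‖x‖) ^ ((n:ℝ)+α)))⁻¹

lemma measurable_Wf (hc : 0 ≤ (n:ℝ)+α) : Measurable (Wf p n α) := by
  apply Measurable.inv
  apply Measurable.ennreal_ofReal
  exact ((Real.continuous_rpow_const hc).comp (continuous_const.mul continuous_norm)).measurable

lemma Wf_pos (x : Fin n → ℚ_[p]) : 0 < Wf p n α x :=
  ENNReal.inv_pos.2 ENNReal.ofReal_ne_top

/-- The auxiliary comparison measure. -/
def mmeas (p : ℕ) [Fact p.Prime] (n : ℕ) (α : ℝ) (N : ℤ)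
    (g : (Fin n → ℚ_[p]) → ℝ≥0∞) : Measure (Fin n → ℚ_[p]) :=
  (padicHaarN p n).restrict (Bball p n N)
    + ((padicHaarN p n).restrict (Bball p n N)ᶜ).withDensity
        (fun x => min (g x) (Wf p n α x))

lemma haar_ac (hc : 0 ≤ (n:ℝ)+α) (g : (Fin n → ℚ_[p]) → ℝ≥0∞) (hg : Measurable g)
    (hgpos : ∀ x, 0 < g x) : padicHaarN p n ≪ mmeas p n α N g := by
  set μ := padicHaarN p n
  refine Measure.AbsolutelyContinuous.mk fun s hs h0 => ?_
  have hδm : Measurable (fun x => min (g x) (Wf p n α x)) := hg.min (measurable_Wf hc)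
  rw [mmeas, Measure.add_apply, add_eq_zero] at h0
  obtain ⟨h1, h2⟩ := h0
  rw [Measure.restrict_apply hs] at h1
  rw [withDensity_apply _ hs, Measure.restrict_restrict hs] at h2
  rw [lintegral_eq_zero_iff hδm] at h2
  have h2' : μ (s ∩ (Bball p n N)ᶜ) = 0 := by
    have : {x | ¬ (fun x => min (g x) (Wf p n α x)) x = (0 : ℝ≥0∞)} = Set.univ := by
      ext x
      simp only [Set.mem_setOf_eq, Set.mem_univ, iff_true]
      exact ne_of_gt (lt_min (hgpos x) (Wf_pos x))
    have hset := ae_iff.1 h2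
    simp only [Pi.zero_apply] at hset
    rw [this, Measure.restrict_apply_univ] at hset
    exact hset
  refine le_antisymm ?_ zero_le
  calc μ s = μ ((s ∩ Bball p n N) ∪ (s ∩ (Bball p n N)ᶜ)) := by
        rw [Set.inter_union_compl]
  _ ≤ μ (s ∩ Bball p n N) + μ (s ∩ (Bball p n N)ᶜ) := measure_union_le _ _
  _ = 0 := by rw [h1, h2', add_zero]

end Key

section Key2

variable {p : ℕ} [Fact p.Prime] {n : ℕ} {α : ℝ} {N : ℤ}

lemma key_bound (hα : 0 < α) (ρ : (Fin n → ℚ_[p]) → ℝ)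
    (g : (Fin n → ℚ_[p]) → ℝ≥0∞) (hg : Measurable g)
    (hgle : ∫⁻ x, g x ∂padicHaarN p n ≤ 1)
    (d : (Fin n → ℚ_[p]) → ℝ) (hd : Measurable d)
    (hfin : normSqH p n α N ρ d ≠ ⊤) :
    ∫⁻ x, ENNReal.ofReal (d x ^ 2) ∂(mmeas p n α N g)
      ≤ (1 + 2 * (padicHaarN p n (Bball p n N))⁻¹) * normSqH p n α N ρ d := by
  have hc : 0 ≤ (n:ℝ) + α := by positivity
  set μ := padicHaarN p n with hμdef
  set Ω := Bball p n N with hΩdef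
  have hΩm : MeasurableSet Ω := measurableSet_Bball
  have hμΩ0 : μ Ω ≠ 0 := Bball_pos.ne'
  have hμΩtop : μ Ω ≠ ⊤ := Bball_lt_top.ne
  set δ : (Fin n → ℚ_[p]) → ℝ≥0∞ := fun x => min (g x) (Wf p n α x) with hδdef
  have hδm : Measurable δ := hg.min (measurable_Wf hc)
  set A := ∫⁻ x in Ω, ENNReal.ofReal (d x ^ 2) ∂μ with hAdef
  set B := ∫⁻ x in Ωᶜ, ENNReal.ofReal (|ρ x| * d x ^ 2) ∂μ with hBdef
  set T := ∫⁻ z in (Ωᶜ ×ˢ Ωᶜ)ᶜ,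
      ENNReal.ofReal ((d z.1 - d z.2) ^ 2 / ‖z.1 - z.2‖ ^ ((n : ℝ) + α)) ∂(μ.prod μ) with hTdef
  have hnormeq : normSqH p n α N ρ d = A + B + T := rfl
  have hAfin : A ≠ ⊤ := by
    refine ne_top_of_le_ne_top hfin ?_
    rw [hnormeq]
    exact le_add_right (le_add_right le_rfl)
  set I : (Fin n → ℚ_[p]) → ℝ≥0∞ :=
    fun x => ∫⁻ y in Ω, ENNReal.ofReal ((d x - d y) ^ 2) ∂μ with hIdef
  have hImeas : Measurable I := by
    have : Measurable fun x => ∫⁻ y, (fun z : (Fin n → ℚ_[p]) × (Fin n → ℚ_[p]) =>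
        ENNReal.ofReal ((d z.1 - d z.2) ^ 2)) (x, y) ∂(μ.restrict Ω) :=
      Measurable.lintegral_prod_right
        ((((hd.comp measurable_fst).sub (hd.comp measurable_snd)).pow_const 2).ennreal_ofReal)
    exact this
  -- Step B
  have hB2 : ∀ x, μ Ω * ENNReal.ofReal (d x ^ 2 / 2) ≤ I x + A := by
    intro x
    calc μ Ω * ENNReal.ofReal (d x ^ 2 / 2)
        = ∫⁻ _ in Ω, ENNReal.ofReal (d x ^ 2 / 2) ∂μ := by
          rw [setLIntegral_const, mul_comm]
    _ ≤ ∫⁻ y in Ω, (ENNReal.ofReal ((d x - d y) ^ 2) + ENNReal.ofReal (d y ^ 2)) ∂μ := by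
          refine lintegral_mono fun y => ?_
          refine le_trans (ENNReal.ofReal_le_ofReal ?_) ENNReal.ofReal_add_le
          nlinarith [sq_nonneg (d x - 2 * d y)]
    _ = I x + A := lintegral_add_right _ ((hd.pow_const 2).ennreal_ofReal)
  -- Step C
  have hC : ∀ x, ENNReal.ofReal (d x ^ 2) ≤ 2 * (μ Ω)⁻¹ * (I x + A) := by
    intro x
    have h2 : ENNReal.ofReal (d x ^ 2 / 2) ≤ (μ Ω)⁻¹ * (I x + A) := by
      have := mul_le_mul_right (hB2 x) (μ Ω)⁻¹
      rwa [← mul_assoc, ENNReal.inv_mul_cancel hμΩ0 hμΩtop, one_mul] at this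
    calc ENNReal.ofReal (d x ^ 2) = 2 * ENNReal.ofReal (d x ^ 2 / 2) := by
          have h := ENNReal.ofReal_mul (p := 2) (q := d x ^ 2 / 2) (by norm_num : (0:ℝ) ≤ 2)
          rw [show (2:ℝ) * (d x ^ 2 / 2) = d x ^ 2 by ring] at h
          rw [h, ENNReal.ofReal_ofNat]
    _ ≤ 2 * ((μ Ω)⁻¹ * (I x + A)) := mul_le_mul_right h2 2
    _ = 2 * (μ Ω)⁻¹ * (I x + A) := (mul_assoc _ _ _).symm
  -- Step D
  have hD : ∀ x, δ x * ENNReal.ofReal (d x ^ 2)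
      ≤ 2 * (μ Ω)⁻¹ * (Wf p n α x * I x + g x * A) := by
    intro x
    calc δ x * ENNReal.ofReal (d x ^ 2)
        ≤ δ x * (2 * (μ Ω)⁻¹ * (I x + A)) := mul_le_mul_right (hC x) _
    _ = 2 * (μ Ω)⁻¹ * (δ x * I x + δ x * A) := by ring
    _ ≤ 2 * (μ Ω)⁻¹ * (Wf p n α x * I x + g x * A) :=
        mul_le_mul_right (add_le_add (mul_le_mul_left (min_le_right _ _) _)
          (mul_le_mul_left (min_le_left _ _) _)) _
  -- Step E
  have hE : ∫⁻ x in Ωᶜ, Wf p n α x * I x ∂μ ≤ T := by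
    have hpt : ∀ x ∈ Ωᶜ, ∀ y ∈ Ω, Wf p n α x * ENNReal.ofReal ((d x - d y) ^ 2)
        ≤ ENNReal.ofReal ((d x - d y) ^ 2 / ‖x - y‖ ^ ((n:ℝ) + α)) := by
      intro x hx y hy
      have hy' : ‖y‖ ≤ (p:ℝ) ^ N := hy
      have hx' : (p:ℝ) ^ N < ‖x‖ := not_le.1 hx
      have hxy : (0:ℝ) < ‖x - y‖ := by
        rw [norm_sub_pos_iff]
        rintro rfl
        exact hx hy
      have hle : ‖x - y‖ ^ ((n:ℝ)+α) ≤ (2 * ‖x‖) ^ ((n:ℝ)+α) := by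
        refine Real.rpow_le_rpow (norm_nonneg _) ?_ hc
        calc ‖x - y‖ ≤ ‖x‖ + ‖y‖ := norm_sub_le _ _
        _ ≤ 2 * ‖x‖ := by nlinarith [le_trans hy' hx'.le]
      calc Wf p n α x * ENNReal.ofReal ((d x - d y) ^ 2)
          = ENNReal.ofReal ((d x - d y) ^ 2) / ENNReal.ofReal ((2 * ‖x‖) ^ ((n:ℝ)+α)) := by
            rw [ENNReal.div_eq_inv_mul]; rfl
      _ ≤ ENNReal.ofReal ((d x - d y) ^ 2) / ENNReal.ofReal (‖x - y‖ ^ ((n:ℝ)+α)) :=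
            ENNReal.div_le_div_left (ENNReal.ofReal_le_ofReal hle) _
      _ = ENNReal.ofReal ((d x - d y) ^ 2 / ‖x - y‖ ^ ((n:ℝ)+α)) :=
            (ENNReal.ofReal_div_of_pos (Real.rpow_pos_of_pos hxy _)).symm
    calc ∫⁻ x in Ωᶜ, Wf p n α x * I x ∂μ
        ≤ ∫⁻ x in Ωᶜ, (∫⁻ y in Ω,
            ENNReal.ofReal ((d x - d y) ^ 2 / ‖x - y‖ ^ ((n:ℝ) + α)) ∂μ) ∂μ := by
          refine lintegral_mono_ae ((ae_restrict_mem hΩm.compl).mono fun x hx => ?_)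
          calc Wf p n α x * I x
              = ∫⁻ y in Ω, Wf p n α x * ENNReal.ofReal ((d x - d y) ^ 2) ∂μ :=
                (lintegral_const_mul _
                  (((measurable_const.sub hd).pow_const 2).ennreal_ofReal)).symm
          _ ≤ _ := lintegral_mono_ae ((ae_restrict_mem hΩm).mono fun y hy => hpt x hx y hy)
    _ = ∫⁻ z in Ωᶜ ×ˢ Ω,
          ENNReal.ofReal ((d z.1 - d z.2) ^ 2 / ‖z.1 - z.2‖ ^ ((n:ℝ) + α)) ∂(μ.prod μ) := by
          rw [← Measure.prod_restrict]
          exact (lintegral_prod _ (measurable_kernel hc d hd).aemeasurable).symm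
    _ ≤ T := by
          refine lintegral_mono_set ?_
          rintro ⟨a, b⟩ ⟨ha, hb⟩
          intro hcon
          exact hcon.2 hb
  -- Step F
  have hgΩc : ∫⁻ x in Ωᶜ, g x ∂μ ≤ 1 := le_trans (setLIntegral_le_lintegral _ _) hgle
  -- Step G
  have hG : ∫⁻ x in Ωᶜ, δ x * ENNReal.ofReal (d x ^ 2) ∂μ ≤ 2 * (μ Ω)⁻¹ * (T + A) := by
    have hconst : (2 : ℝ≥0∞) * (μ Ω)⁻¹ ≠ ⊤ :=
      ENNReal.mul_ne_top ENNReal.ofNat_ne_top (ENNReal.inv_ne_top.2 hμΩ0)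
    calc ∫⁻ x in Ωᶜ, δ x * ENNReal.ofReal (d x ^ 2) ∂μ
        ≤ ∫⁻ x in Ωᶜ, 2 * (μ Ω)⁻¹ * (Wf p n α x * I x + g x * A) ∂μ :=
          lintegral_mono fun x => hD x
    _ = 2 * (μ Ω)⁻¹ * ∫⁻ x in Ωᶜ, (Wf p n α x * I x + g x * A) ∂μ :=
          lintegral_const_mul' _ _ hconst
    _ = 2 * (μ Ω)⁻¹ * ((∫⁻ x in Ωᶜ, Wf p n α x * I x ∂μ) + (∫⁻ x in Ωᶜ, g x * A ∂μ)) := by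
          rw [lintegral_add_left (f := fun x => Wf p n α x * I x) ((measurable_Wf hc).mul hImeas)]
    _ = 2 * (μ Ω)⁻¹ * ((∫⁻ x in Ωᶜ, Wf p n α x * I x ∂μ) + (∫⁻ x in Ωᶜ, g x ∂μ) * A) := by
          rw [lintegral_mul_const' A _ hAfin]
    _ ≤ 2 * (μ Ω)⁻¹ * (T + 1 * A) :=
          mul_le_mul_right (add_le_add hE (mul_le_mul_left hgΩc A)) _
    _ = 2 * (μ Ω)⁻¹ * (T + A) := by rw [one_mul]
  -- assemble
  have hsplit : ∫⁻ x, ENNReal.ofReal (d x ^ 2) ∂(mmeas p n α N g)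
      = A + ∫⁻ x in Ωᶜ, δ x * ENNReal.ofReal (d x ^ 2) ∂μ := by
    rw [mmeas, lintegral_add_measure,
      lintegral_withDensity_eq_lintegral_mul _ hδm ((hd.pow_const 2).ennreal_ofReal)]
    rfl
  rw [hsplit, hnormeq]
  calc A + ∫⁻ x in Ωᶜ, δ x * ENNReal.ofReal (d x ^ 2) ∂μ
      ≤ A + 2 * (μ Ω)⁻¹ * (T + A) := add_le_add le_rfl hG
  _ = (1 + 2 * (μ Ω)⁻¹) * A + 2 * (μ Ω)⁻¹ * T := by ring
  _ ≤ (1 + 2 * (μ Ω)⁻¹) * A + (1 + 2 * (μ Ω)⁻¹) * (B + T) :=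
      add_le_add le_rfl (mul_le_mul' (self_le_add_left _ _) (self_le_add_left _ _))
  _ = (1 + 2 * (μ Ω)⁻¹) * (A + B + T) := by ring

end Key2

section LpSec

variable {p : ℕ} [Fact p.Prime] {n : ℕ} {α : ℝ} {N : ℤ}

lemma eLpNorm_two_eq (m : Measure (Fin n → ℚ_[p])) (d : (Fin n → ℚ_[p]) → ℝ) :
    eLpNorm d 2 m = (∫⁻ x, ENNReal.ofReal (d x ^ 2) ∂m) ^ (1/2 : ℝ) := by
  rw [eLpNorm_eq_lintegral_rpow_enorm_toReal two_ne_zero ENNReal.ofNat_ne_top, ENNReal.toReal_ofNat]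
  congr 1
  refine lintegral_congr fun x => ?_
  rw [← ofReal_norm, ENNReal.ofReal_rpow_of_nonneg (norm_nonneg _)
    (by norm_num : (0:ℝ) ≤ 2)]
  congr 1
  rw [Real.norm_eq_abs, show ((2:ℝ)) = ((2:ℕ):ℝ) by norm_num, Real.rpow_natCast, sq_abs]

lemma rpow_half_lt {a b : ℝ≥0∞} (h : a < b ^ 2) : a ^ (1/2 : ℝ) < b := by
  have h2 : (b ^ 2 : ℝ≥0∞) = b ^ (2:ℝ) := by
    rw [← ENNReal.rpow_natCast b 2]; norm_num
  calc a ^ (1/2:ℝ) < (b ^ (2:ℝ)) ^ (1/2:ℝ) :=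
        ENNReal.rpow_lt_rpow (h2 ▸ h) (by norm_num)
  _ = b := by
      rw [← ENNReal.rpow_mul]
      norm_num

lemma rpow_half_le {a b : ℝ≥0∞} (h : a ≤ b ^ 2) : a ^ (1/2 : ℝ) ≤ b := by
  have h2 : (b ^ 2 : ℝ≥0∞) = b ^ (2:ℝ) := by
    rw [← ENNReal.rpow_natCast b 2]; norm_num
  calc a ^ (1/2:ℝ) ≤ (b ^ (2:ℝ)) ^ (1/2:ℝ) :=
        ENNReal.rpow_le_rpow (h2 ▸ h) (by norm_num)
  _ = b := by
      rw [← ENNReal.rpow_mul]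
      norm_num

end LpSec


/-- `H^α_ρ(Ω)` is complete: every Cauchy sequence (w.r.t. the
`H^α_ρ(Ω)`-norm) of measurable functions with finite norm converges in this norm
to a measurable function with finite norm. -/
theorem padic_sobolev_complete (p : ℕ) [Fact p.Prime] (n : ℕ) (hn : 1 ≤ n)
    (α : ℝ) (hα : 0 < α) (N : ℤ)
    (ρ : (Fin n → ℚ_[p]) → ℝ) (hρmeas : Measurable ρ)
    (hρint : IntegrableOn ρ (Bball p n N)ᶜ (padicHaarN p n))
    (u : ℕ → (Fin n → ℚ_[p]) → ℝ)
    (humeas : ∀ k, Measurable (u k))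
    (hufin : ∀ k, normSqH p n α N ρ (u k) < ⊤)
    (hcauchy : ∀ ε : ℝ≥0∞, 0 < ε → ∃ M : ℕ, ∀ k h, M ≤ k → M ≤ h →
      normSqH p n α N ρ (u k - u h) < ε) :
    ∃ v : (Fin n → ℚ_[p]) → ℝ, Measurable v ∧ normSqH p n α N ρ v < ⊤ ∧
      Filter.Tendsto (fun k => normSqH p n α N ρ (u k - v)) Filter.atTop (nhds 0) := by
  have hc : 0 ≤ (n:ℝ) + α := by positivity
  set μ := padicHaarN p n with hμdef
  set Ω := Bball p n N with hΩdef
  obtain ⟨g₀, hg₀pos, hg₀meas, hg₀int⟩ := exists_pos_lintegral_lt_of_sigmaFinite μ one_ne_zero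
  set g : (Fin n → ℚ_[p]) → ℝ≥0∞ := fun x => (g₀ x : ℝ≥0∞) with hgdef
  have hgmeas : Measurable g := hg₀meas.coe_nnreal_ennreal
  have hgpos : ∀ x, 0 < g x := fun x => ENNReal.coe_pos.2 (hg₀pos x)
  have hgle : ∫⁻ x, g x ∂μ ≤ 1 := hg₀int.le
  set m := mmeas p n α N g with hmdef
  set K : ℝ≥0∞ := 1 + 2 * (μ Ω)⁻¹ with hKdef
  have hK0 : K ≠ 0 := (zero_lt_one.trans_le le_self_add).ne'
  have hKtop : K ≠ ⊤ := by
    rw [hKdef]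
    exact ENNReal.add_ne_top.2 ⟨ENNReal.one_ne_top,
      ENNReal.mul_ne_top ENNReal.ofNat_ne_top (ENNReal.inv_ne_top.2 Bball_pos.ne')⟩
  have hbound : ∀ d : (Fin n → ℚ_[p]) → ℝ, Measurable d → normSqH p n α N ρ d ≠ ⊤ →
      ∫⁻ x, ENNReal.ofReal (d x ^ 2) ∂m ≤ K * normSqH p n α N ρ d :=
    fun d hd hfin => key_bound hα ρ g hgmeas hgle d hd hfin
  have hmem : ∀ k, MemLp (u k) 2 m := by
    intro k
    refine ⟨(humeas k).aestronglyMeasurable, ?_⟩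
    rw [eLpNorm_two_eq]
    exact ENNReal.rpow_lt_top_of_nonneg (by norm_num)
      (((hbound _ (humeas k) (hufin k).ne).trans_lt
        (ENNReal.mul_lt_top hKtop.lt_top (hufin k))).ne)
  set B : ℕ → ℝ≥0∞ := fun j => (2⁻¹ : ℝ≥0∞) ^ (j+1) with hBdef
  have hBne : ∀ j, B j ≠ 0 := fun j =>
    pow_ne_zero _ (ENNReal.inv_ne_zero.2 ENNReal.ofNat_ne_top)
  have hBsum : ∑' j, B j ≠ ⊤ := by
    refine ne_top_of_le_ne_top ?_ (ENNReal.tsum_le_tsum (f := B)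
      (g := fun j => (2⁻¹ : ℝ≥0∞) ^ j) fun j => ?_)
    · simpa only [ENNReal.tsum_geometric, ENNReal.one_sub_inv_two, inv_inv]
        using ENNReal.ofNat_ne_top
    · show (2⁻¹ : ℝ≥0∞) ^ (j+1) ≤ (2⁻¹ : ℝ≥0∞) ^ j
      rw [pow_succ]
      calc (2⁻¹ : ℝ≥0∞) ^ j * 2⁻¹ ≤ (2⁻¹ : ℝ≥0∞) ^ j * 1 :=
            mul_le_mul_right (ENNReal.inv_le_one.2 one_le_two) _
      _ = (2⁻¹ : ℝ≥0∞) ^ j := mul_one _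
  set ε : ℕ → ℝ≥0∞ := fun j => K⁻¹ * (B j) ^ 2 with hεdef
  have hεpos : ∀ j, 0 < ε j := fun j =>
    ENNReal.mul_pos (ENNReal.inv_ne_zero.2 hKtop) (pow_ne_zero _ (hBne j))
  set M : ℕ → ℕ := fun j => (hcauchy (ε j) (hεpos j)).choose with hMdef
  have hM : ∀ j k h, M j ≤ k → M j ≤ h → normSqH p n α N ρ (u k - u h) < ε j :=
    fun j => (hcauchy (ε j) (hεpos j)).choose_spec
  set φ : ℕ → ℕ := fun j => Nat.rec (M 0) (fun i ih => max (M (i+1)) (ih + 1)) j with hφdef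
  have hφmono : StrictMono φ := strictMono_nat_of_lt_succ fun j =>
    lt_of_lt_of_le (Nat.lt_succ_self _) (le_max_right _ _)
  have hφM : ∀ j, M j ≤ φ j := by
    intro j
    cases j with
    | zero => exact le_rfl
    | succ i => exact le_max_left _ _
  have hsubmeas : ∀ k h : ℕ, Measurable (u k - u h) := fun k h => (humeas k).sub (humeas h)
  have hfinsub : ∀ k h : ℕ, normSqH p n α N ρ (u k - u h) ≠ ⊤ := fun k h =>
    ((normSqH_sub_le hc ρ (u k) (u h) hρmeas (humeas k) (humeas h)).trans_lt
      (ENNReal.add_lt_top.2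
        ⟨ENNReal.mul_lt_top ENNReal.ofNat_lt_top (hufin k),
         ENNReal.mul_lt_top ENNReal.ofNat_lt_top (hufin h)⟩)).ne
  have hkey : ∀ j k h, M j ≤ k → M j ≤ h → eLpNorm (u k - u h) 2 m < B j := by
    intro j k h hk hh
    rw [eLpNorm_two_eq]
    refine rpow_half_lt ?_
    calc ∫⁻ x, ENNReal.ofReal ((u k - u h) x ^ 2) ∂m
        ≤ K * normSqH p n α N ρ (u k - u h) := hbound _ (hsubmeas k h) (hfinsub k h)
    _ < K * ε j := ENNReal.mul_lt_mul_right hK0 hKtop (hM j k h hk hh)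
    _ = (B j) ^ 2 := by
        rw [hεdef, ← mul_assoc, ENNReal.mul_inv_cancel hK0 hKtop, one_mul]
  obtain ⟨flim, hflim_mem, hflim_tendsto⟩ :=
    MeasureTheory.Lp.cauchy_complete_eLpNorm (μ := m) (E := ℝ) one_le_two (fun j => hmem (φ j)) hBsum
      (fun J a b ha hb => hkey J (φ a) (φ b) (le_trans (hφM J) (hφmono.monotone ha))
        (le_trans (hφM J) (hφmono.monotone hb)))
  have htim : TendstoInMeasure m (fun j => u (φ j)) atTop flim :=
    tendstoInMeasure_of_tendsto_eLpNorm two_ne_zero (fun j => (hmem (φ j)).1)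
      hflim_mem.1 hflim_tendsto
  obtain ⟨ns, hns, haem⟩ := htim.exists_seq_tendsto_ae
  set v : (Fin n → ℚ_[p]) → ℝ := hflim_mem.1.mk flim with hvdef
  have hvmeas : Measurable v := hflim_mem.1.stronglyMeasurable_mk.measurable
  have hac : μ ≪ m := haar_ac hc g hgmeas hgpos
  have haeμ : ∀ᵐ x ∂μ, Tendsto (fun i => u (φ (ns i)) x) atTop (𝓝 (v x)) := by
    filter_upwards [hac.ae_le haem, hac.ae_le hflim_mem.1.ae_eq_mk] with x hx hx2
    rwa [hx2] at hx
  set ψ : ℕ → ℕ := fun i => φ (ns i) with hψdef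
  have hψle : ∀ i, i ≤ ψ i := fun i => le_trans hns.le_apply hφmono.le_apply
  have hmain : ∀ εe : ℝ≥0∞, 0 < εe → ∃ Mk : ℕ, ∀ k, Mk ≤ k →
      normSqH p n α N ρ (u k - v) ≤ εe := by
    intro εe hεe
    have hεe3 : (0:ℝ≥0∞) < εe / 3 := ENNReal.div_pos hεe.ne' (by norm_num)
    obtain ⟨M0, hM0⟩ := hcauchy (εe/3) hεe3
    refine ⟨M0, fun k hk => ?_⟩
    have hconv : ∀ᵐ x ∂μ, Tendsto (fun j => (u k - u (ψ j)) x) atTop (𝓝 ((u k - v) x)) :=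
      haeμ.mono fun x hx => by simpa using tendsto_const_nhds.sub hx
    have hev : ∀ᶠ j in atTop, normSqH p n α N ρ (u k - u (ψ j)) ≤ εe/3 :=
      eventually_atTop.2 ⟨M0, fun j hj => (hM0 k (ψ j) hk (le_trans hj (hψle j))).le⟩
    have hfat := fatou_normSqH hc ρ hρmeas (fun j => u k - u (ψ j))
      (fun j => (humeas k).sub (humeas (ψ j))) (u k - v) hconv (εe/3) hev
    exact le_trans hfat ENNReal.mul_div_le
  refine ⟨v, hvmeas, ?_, ?_⟩
  · obtain ⟨Mk, hMk⟩ := hmain 1 zero_lt_one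
    have h1 : normSqH p n α N ρ (u Mk - v) ≤ 1 := hMk Mk le_rfl
    have h2 := normSqH_sub_le (N := N) hc ρ (u Mk) (u Mk - v) hρmeas (humeas Mk)
      ((humeas Mk).sub hvmeas)
    have h3 : u Mk - (u Mk - v) = v := by ext x; simp
    rw [h3] at h2
    refine lt_of_le_of_lt h2 (ENNReal.add_lt_top.2 ⟨?_, ?_⟩)
    · exact ENNReal.mul_lt_top ENNReal.ofNat_lt_top (hufin Mk)
    · exact ENNReal.mul_lt_top ENNReal.ofNat_lt_top (lt_of_le_of_lt h1 ENNReal.one_lt_top)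
  · rw [ENNReal.tendsto_atTop_zero]
    intro εe hεe
    obtain ⟨Mk, hMk⟩ := hmain εe hεe
    exact ⟨Mk, fun k hk => hMk k hk⟩
end
end

section
/- Let p be a prime, n ≥ 1, α > 0, N ∈ ℤ, Ω = B_N ⊆ ℚ_p^n, and let ν ∈ ℤ with ν ≥ −N, γ = p^{−ν}. The ball Ω is the disjoint union of the ℓ = p^{n(N+ν)} balls of radius γ contained in it; for f ∈ L²(Ω) let Pf be the function whose value at x ∈ Ω equals γ^{−n} ∫_{Q} f(y) dy, where Q is the unique ball of radius γ of the partition containing x (note each such Q has Haar measure γ^n). Then ‖f − Pf‖²_{L²(Ω)} ≤ γ^α ∬_{Ω×Ω} |f(x)−f(y)|²/‖x−y‖^{n+α} dx dy. -/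
noncomputable section

open MeasureTheory Metric ENNReal

section AuxPadic

variable {p : ℕ} [Fact p.Prime]

instance : (padicHaar p).IsAddLeftInvariant := by unfold padicHaar; infer_instance
instance : IsFiniteMeasureOnCompacts (padicHaar p) := by unfold padicHaar; infer_instance
instance : (padicHaar p).Regular := by unfold padicHaar; infer_instance
instance : SigmaFinite (padicHaar p) := by infer_instance

lemma padicHaar_closedBall_translate (c : ℚ_[p]) (r : ℝ) :
    padicHaar p (closedBall c r) = padicHaar p (closedBall 0 r) := by
  have : closedBall c r = (fun y => -c + y) ⁻¹' (closedBall (0:ℚ_[p]) r) := by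
    ext y
    simp [mem_closedBall, dist_eq_norm, neg_add_eq_sub]
  rw [this, measure_preimage_add]

lemma padicHaar_unit : padicHaar p (closedBall (0:ℚ_[p]) 1) = 1 :=
  Measure.addHaarMeasure_self

lemma ball_decomp (m : ℤ) :
    closedBall (0:ℚ_[p]) ((p:ℝ)^m) =
      ⋃ i : Fin p, closedBall ((i:ℚ_[p]) * (p:ℚ_[p])^(-m)) ((p:ℝ)^(m-1)) := by
  have hp1 : (1:ℝ) < p := Nat.one_lt_cast.mpr (Fact.out : p.Prime).one_lt
  have hp0 : (p:ℚ_[p]) ≠ 0 := Nat.cast_ne_zero.mpr (Fact.out : p.Prime).ne_zero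
  ext y
  simp only [Set.mem_iUnion, mem_closedBall, dist_eq_norm, sub_zero]
  constructor
  · intro hy
    have hz : ‖(p:ℚ_[p])^m * y‖ ≤ 1 := by
      rw [norm_mul, Padic.norm_p_zpow]
      calc (p:ℝ)^(-m) * ‖y‖ ≤ (p:ℝ)^(-m) * (p:ℝ)^m := by
            apply mul_le_mul_of_nonneg_left hy (le_of_lt (zpow_pos (by linarith) _))
        _ = 1 := by rw [← zpow_add₀ (by linarith : (p:ℝ) ≠ 0)]; simp
    set w : ℤ_[p] := ⟨(p:ℚ_[p])^m * y, hz⟩ with hw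
    have hi : w.appr 1 < p := by simpa using w.appr_lt 1
    refine ⟨⟨w.appr 1, hi⟩, ?_⟩
    have hspec : ‖w - (w.appr 1 : ℤ_[p])‖ ≤ (p:ℝ)^(-1:ℤ) :=
      ((w - (w.appr 1 : ℤ_[p])).norm_le_pow_iff_mem_span_pow 1).mpr (w.appr_spec 1)
    have key : y - ((w.appr 1 : ℚ_[p]) * (p:ℚ_[p])^(-m))
        = (p:ℚ_[p])^(-m) * ((w : ℚ_[p]) - (w.appr 1 : ℚ_[p])) := by
      have : (w : ℚ_[p]) = (p:ℚ_[p])^m * y := rfl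
      have hpm : (p:ℚ_[p])^m ≠ 0 := zpow_ne_zero _ hp0
      rw [this]
      field_simp
      rw [mul_sub, mul_left_comm, ← zpow_add₀ hp0, neg_add_cancel, zpow_zero, mul_one]
      ring
    rw [show ((⟨w.appr 1, hi⟩ : Fin p) : ℚ_[p]) = ((w.appr 1 : ℕ) : ℚ_[p]) by norm_cast]
    rw [key, norm_mul, Padic.norm_p_zpow, neg_neg]
    have hnormcoe : ‖(w : ℚ_[p]) - (w.appr 1 : ℚ_[p])‖ ≤ (p:ℝ)^(-1:ℤ) := by
      have : ((w - (w.appr 1 : ℤ_[p]) : ℤ_[p]) : ℚ_[p]) = (w : ℚ_[p]) - (w.appr 1 : ℚ_[p]) := by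
        push_cast; ring
      rw [← this, PadicInt.padic_norm_e_of_padicInt]
      exact hspec
    calc (p:ℝ)^m * ‖(w : ℚ_[p]) - (w.appr 1 : ℚ_[p])‖ ≤ (p:ℝ)^m * (p:ℝ)^(-1:ℤ) := by
          apply mul_le_mul_of_nonneg_left hnormcoe (le_of_lt (zpow_pos (by linarith) _))
      _ = (p:ℝ)^(m-1) := by rw [← zpow_add₀ (by linarith : (p:ℝ) ≠ 0)]; ring_nf
  · rintro ⟨i, hi⟩
    have h1 : ‖(i:ℚ_[p]) * (p:ℚ_[p])^(-m)‖ ≤ (p:ℝ)^m := by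
      rw [norm_mul, Padic.norm_p_zpow, neg_neg]
      have : ‖(i:ℚ_[p])‖ ≤ 1 := by
        have := Padic.norm_int_le_one (p := p) (i : ℤ)
        simpa using this
      calc ‖(i:ℚ_[p])‖ * (p:ℝ)^m ≤ 1 * (p:ℝ)^m := by
            apply mul_le_mul_of_nonneg_right this (le_of_lt (zpow_pos (by linarith) _))
        _ = (p:ℝ)^m := one_mul _
    calc ‖y‖ = ‖(y - (i:ℚ_[p]) * (p:ℚ_[p])^(-m)) + (i:ℚ_[p]) * (p:ℚ_[p])^(-m)‖ := by ring_nf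
      _ ≤ max ‖y - (i:ℚ_[p]) * (p:ℚ_[p])^(-m)‖ ‖(i:ℚ_[p]) * (p:ℚ_[p])^(-m)‖ :=
          Padic.nonarchimedean _ _
      _ ≤ (p:ℝ)^m := by
          apply max_le (le_trans hi ?_) h1
          apply zpow_le_zpow_right₀ (le_of_lt hp1) (by omega)

lemma ball_disjoint (m : ℤ) : Pairwise (Function.onFun Disjoint
    fun i : Fin p => closedBall ((i:ℚ_[p]) * (p:ℚ_[p])^(-m)) ((p:ℝ)^(m-1))) := by
  have hp1 : (1:ℝ) < p := Nat.one_lt_cast.mpr (Fact.out : p.Prime).one_lt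
  intro i j hij
  rw [Function.onFun]
  rw [Set.disjoint_left]
  intro y hyi hyj
  rw [mem_closedBall, dist_eq_norm] at hyi hyj
  have hdist : ‖(i:ℚ_[p]) * (p:ℚ_[p])^(-m) - (j:ℚ_[p]) * (p:ℚ_[p])^(-m)‖ ≤ (p:ℝ)^(m-1) := by
    have : (i:ℚ_[p]) * (p:ℚ_[p])^(-m) - (j:ℚ_[p]) * (p:ℚ_[p])^(-m)
        = -(y - (i:ℚ_[p]) * (p:ℚ_[p])^(-m)) + (y - (j:ℚ_[p]) * (p:ℚ_[p])^(-m)) := by ring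
    rw [this]
    exact le_trans (Padic.nonarchimedean _ _) (by rw [norm_neg]; exact max_le hyi hyj)
  have hnorm1 : ‖((i:ℚ_[p]) - (j:ℚ_[p]))‖ = 1 := by
    have hcast : ((i:ℚ_[p]) - (j:ℚ_[p])) = (((i:ℕ) - (j:ℕ) : ℤ) : ℚ_[p]) := by push_cast; ring
    rw [hcast]
    have hle := Padic.norm_int_le_one (p := p) ((i:ℕ) - (j:ℕ) : ℤ)
    have hnd : ¬ ((p:ℤ) ∣ ((i:ℕ) - (j:ℕ) : ℤ)) := by
      intro hdvd
      have hi := i.isLt; have hj := j.isLt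
      have hne : (i:ℕ) ≠ (j:ℕ) := fun h => hij (Fin.ext h)
      have := Int.eq_zero_of_dvd_of_natAbs_lt_natAbs hdvd (by omega)
      omega
    have := (Padic.norm_intCast_lt_one_iff (p := p) (k := ((i:ℕ) - (j:ℕ) : ℤ))).not.mpr hnd
    linarith [lt_or_eq_of_le hle]
  have : ‖(i:ℚ_[p]) * (p:ℚ_[p])^(-m) - (j:ℚ_[p]) * (p:ℚ_[p])^(-m)‖ = (p:ℝ)^m := by
    rw [show (i:ℚ_[p]) * (p:ℚ_[p])^(-m) - (j:ℚ_[p]) * (p:ℚ_[p])^(-m)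
        = ((i:ℚ_[p]) - (j:ℚ_[p])) * (p:ℚ_[p])^(-m) by ring,
      norm_mul, Padic.norm_p_zpow, hnorm1, one_mul, neg_neg]
  rw [this] at hdist
  have : (p:ℝ)^m ≤ (p:ℝ)^(m-1) := hdist
  have h2 : (p:ℝ)^(m-1) < (p:ℝ)^m := zpow_lt_zpow_right₀ hp1 (by omega)
  linarith

lemma padicHaar_ball_succ (m : ℤ) :
    padicHaar p (closedBall (0:ℚ_[p]) ((p:ℝ)^m))
      = p * padicHaar p (closedBall 0 ((p:ℝ)^(m-1))) := by
  rw [ball_decomp m, measure_iUnion (ball_disjoint m) (fun i => measurableSet_closedBall)]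
  simp only [padicHaar_closedBall_translate]
  rw [tsum_fintype]
  simp [Finset.sum_const, nsmul_eq_mul]

lemma padicHaar_ball (m : ℤ) :
    padicHaar p (closedBall (0:ℚ_[p]) ((p:ℝ)^m)) = ENNReal.ofReal ((p:ℝ)^m) := by
  have hp0 : (0:ℝ) < p := Nat.cast_pos.mpr (Fact.out : p.Prime).pos
  have hofr : ∀ k : ℤ, ENNReal.ofReal ((p:ℝ)^k) = p * ENNReal.ofReal ((p:ℝ)^(k-1)) := by
    intro k
    rw [show (p:ℝ)^k = p * (p:ℝ)^(k-1) by
      rw [← zpow_one_add₀ (ne_of_gt hp0)]; ring_nf,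
      ENNReal.ofReal_mul hp0.le, ENNReal.ofReal_natCast]
  induction m using Int.induction_on with
  | zero => simpa using padicHaar_unit
  | succ k ih =>
    rw [padicHaar_ball_succ, show ((k:ℤ) + 1 - 1) = (k:ℤ) by ring, ih, hofr (k+1),
      show ((k:ℤ) + 1 - 1) = (k:ℤ) by ring]
  | pred k ih =>
    have := padicHaar_ball_succ (p := p) (-(k:ℤ))
    rw [ih, hofr (-(k:ℤ))] at this
    have hcancel : padicHaar p (closedBall 0 ((p:ℝ)^(-(k:ℤ)-1)))
        = ENNReal.ofReal ((p:ℝ)^(-(k:ℤ)-1)) := by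
      have h0 : ((p:ℕ):ℝ≥0∞) ≠ 0 := by simp [(Fact.out : p.Prime).ne_zero]
      have htop : ((p:ℕ):ℝ≥0∞) ≠ ⊤ := by simp
      exact (ENNReal.mul_left_strictMono h0 htop).injective
        (by rw [mul_comm _ ((p:ℕ):ℝ≥0∞), mul_comm _ ((p:ℕ):ℝ≥0∞)]; exact this.symm)
    exact hcancel

lemma padicHaar_closedBall (x : ℚ_[p]) (m : ℤ) :
    padicHaar p (closedBall x ((p:ℝ)^m)) = ENNReal.ofReal ((p:ℝ)^m) := by
  rw [padicHaar_closedBall_translate, padicHaar_ball]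

lemma padicHaarN_closedBall (n : ℕ) (x : Fin n → ℚ_[p]) (m : ℤ) :
    padicHaarN p n (closedBall x ((p:ℝ)^m)) = ENNReal.ofReal (((p:ℝ)^m)^n) := by
  have hp0 : (0:ℝ) < p := Nat.cast_pos.mpr (Fact.out : p.Prime).pos
  have h0 : (0:ℝ) ≤ (p:ℝ)^m := (zpow_pos hp0 _).le
  rw [closedBall_pi x h0, padicHaarN, Measure.pi_pi]
  simp [padicHaar_closedBall, ← ENNReal.ofReal_pow h0]

lemma lintegral_sq_le {α : Type*} [MeasurableSpace α] (μ : Measure α) (G : α → ℝ≥0∞)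
    (hG : AEMeasurable G μ) :
    (∫⁻ a, G a ∂μ)^2 ≤ μ Set.univ * ∫⁻ a, (G a)^2 ∂μ := by
  have hconj : Real.HolderConjugate 2 2 := Real.HolderConjugate.two_two
  have h := ENNReal.lintegral_mul_le_Lp_mul_Lq μ hconj hG
    (aemeasurable_const (b := (1:ℝ≥0∞)))
  simp only [Pi.mul_apply, mul_one, ENNReal.one_rpow, lintegral_one] at h
  have h2 : (∫⁻ a, G a ∂μ)^2
      ≤ ((∫⁻ a, G a ^ (2:ℝ) ∂μ) ^ (1/(2:ℝ)) * (μ Set.univ) ^ (1/(2:ℝ)))^2 :=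
    pow_le_pow_left' h 2
  calc (∫⁻ a, G a ∂μ)^2 ≤ _ := h2
    _ = (∫⁻ a, G a ^ (2:ℝ) ∂μ) * μ Set.univ := by
        rw [mul_pow, ← ENNReal.rpow_natCast (_ ^ (1/(2:ℝ))) 2,
          ← ENNReal.rpow_natCast ((μ Set.univ) ^ (1/(2:ℝ))) 2,
          ← ENNReal.rpow_mul, ← ENNReal.rpow_mul]
        norm_num
    _ = μ Set.univ * ∫⁻ a, (G a)^2 ∂μ := by
        rw [mul_comm]
        congr 1
        apply lintegral_congr
        intro a
        rw [← ENNReal.rpow_natCast (G a) 2]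
        norm_num

instance (n : ℕ) : SigmaFinite (padicHaarN p n) := by
  unfold padicHaarN; infer_instance

end AuxPadic

/-- For the projection `Pf` of `f` onto averages over the balls of
radius `γ = p^{−ν}` partitioning `Ω = B_N` (the ball of the partition containing `x` is
`closedBall x γ`, of Haar measure `γ^n`), one has
`‖f − Pf‖²_{L²(Ω)} ≤ γ^α ∬_{Ω×Ω} |f(x)−f(y)|²/‖x−y‖^{n+α} dx dy`. -/
theorem padic_projection_estimate (p : ℕ) [Fact p.Prime] (n : ℕ) (hn : 1 ≤ n)
    (α : ℝ) (hα : 0 < α) (N : ℤ) (ν : ℤ) (hν : -N ≤ ν)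
    (f : (Fin n → ℚ_[p]) → ℝ) (hfmeas : Measurable f)
    (hfint : IntegrableOn f (Bball p n N) (padicHaarN p n))
    (γ : ℝ) (hγ : γ = (p : ℝ) ^ (-ν)) :
    (∀ x, (padicHaarN p n) (Metric.closedBall x γ) = ENNReal.ofReal (γ ^ n)) ∧
    (∫⁻ x in Bball p n N,
        ENNReal.ofReal
          ((f x - (γ ^ n)⁻¹ * ∫ y in Metric.closedBall x γ, f y ∂padicHaarN p n) ^ 2)
        ∂padicHaarN p n)
      ≤ ENNReal.ofReal (γ ^ α) *
        ∫⁻ z in (Bball p n N) ×ˢ (Bball p n N),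
          ENNReal.ofReal ((f z.1 - f z.2) ^ 2 / ‖z.1 - z.2‖ ^ ((n : ℝ) + α))
          ∂((padicHaarN p n).prod (padicHaarN p n)) := by
  have hp1 : (1:ℝ) < p := Nat.one_lt_cast.mpr (Fact.out : p.Prime).one_lt
  have hγpos : (0:ℝ) < γ := by rw [hγ]; exact zpow_pos (by linarith) _
  have hγn : (0:ℝ) < γ ^ n := pow_pos hγpos n
  have he : (0:ℝ) ≤ (n:ℝ) + α := by positivity
  have part1 : ∀ x : Fin n → ℚ_[p],
      padicHaarN p n (Metric.closedBall x γ) = ENNReal.ofReal (γ ^ n) := by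
    intro x
    rw [hγ]
    exact padicHaarN_closedBall n x (-ν)
  refine ⟨part1, ?_⟩
  have hΩmeas : MeasurableSet (Bball p n N) :=
    (isClosed_le continuous_norm continuous_const).measurableSet
  have hγleN : γ ≤ (p:ℝ)^N := by
    rw [hγ]; exact zpow_le_zpow_right₀ (by linarith) (by omega)
  have hQsub : ∀ x ∈ Bball p n N, Metric.closedBall x γ ⊆ Bball p n N := by
    intro x hx y hy
    rw [mem_closedBall, dist_eq_norm] at hy
    have hxN : ‖x‖ ≤ (p:ℝ)^N := hx
    show ‖y‖ ≤ (p:ℝ)^N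
    rw [pi_norm_le_iff_of_nonneg (by positivity)]
    intro i
    have h1 : ‖y i - x i‖ ≤ (p:ℝ)^N := by
      calc ‖y i - x i‖ = ‖(y - x) i‖ := by simp
        _ ≤ ‖y - x‖ := norm_le_pi_norm (y - x) i
        _ ≤ γ := hy
        _ ≤ (p:ℝ)^N := hγleN
    have h2 : ‖x i‖ ≤ (p:ℝ)^N := le_trans (norm_le_pi_norm x i) hxN
    calc ‖y i‖ = ‖(y i - x i) + x i‖ := by ring_nf
      _ ≤ max ‖y i - x i‖ ‖x i‖ := Padic.nonarchimedean _ _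
      _ ≤ (p:ℝ)^N := max_le h1 h2
  have hgmeas : Measurable fun z : (Fin n → ℚ_[p]) × (Fin n → ℚ_[p]) =>
      ENNReal.ofReal ((f z.1 - f z.2)^2 / ‖z.1 - z.2‖ ^ ((n:ℝ)+α)) := by
    apply ENNReal.measurable_ofReal.comp
    apply Measurable.div
    · exact ((hfmeas.comp measurable_fst).sub (hfmeas.comp measurable_snd)).pow_const 2
    · exact ((Real.continuous_rpow_const he).comp
        (continuous_fst.sub continuous_snd).norm).measurable
  have key : ∀ x ∈ Bball p n N,
      ENNReal.ofReal ((f x - (γ ^ n)⁻¹ * ∫ y in Metric.closedBall x γ, f y ∂padicHaarN p n) ^ 2)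
        ≤ ENNReal.ofReal (γ ^ α) *
          ∫⁻ y in Bball p n N,
            ENNReal.ofReal ((f x - f y)^2 / ‖x - y‖ ^ ((n:ℝ)+α)) ∂padicHaarN p n := by
    intro x hx
    set Q := Metric.closedBall x γ with hQdef
    have hμQ := part1 x
    have hint : IntegrableOn f Q (padicHaarN p n) := hfint.mono_set (hQsub x hx)
    have hconst : IntegrableOn (fun _ => f x) Q (padicHaarN p n) :=
      integrableOn_const (by rw [hμQ]; exact ENNReal.ofReal_ne_top)
    have hdiff : IntegrableOn (fun y => f x - f y) Q (padicHaarN p n) := hconst.sub hint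
    have hI : f x - (γ ^ n)⁻¹ * ∫ y in Q, f y ∂padicHaarN p n
        = (γ ^ n)⁻¹ * ∫ y in Q, (f x - f y) ∂padicHaarN p n := by
      rw [integral_sub hconst hint, setIntegral_const, measureReal_def, hμQ,
        ENNReal.toReal_ofReal hγn.le, smul_eq_mul]
      field_simp
    set I := ∫ y in Q, (f x - f y) ∂padicHaarN p n with hIdef
    have hsq : ∀ y, (ENNReal.ofReal |f x - f y|)^2 = ENNReal.ofReal ((f x - f y)^2) := fun y => by
      rw [← ENNReal.ofReal_pow (abs_nonneg _), sq_abs]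
    have hCS : (∫⁻ y in Q, ENNReal.ofReal |f x - f y| ∂padicHaarN p n)^2
        ≤ ENNReal.ofReal (γ^n) * ∫⁻ y in Q, ENNReal.ofReal ((f x - f y)^2) ∂padicHaarN p n := by
      have h := lintegral_sq_le ((padicHaarN p n).restrict Q)
        (fun y => ENNReal.ofReal |f x - f y|)
        ((ENNReal.measurable_ofReal.comp ((measurable_const.sub hfmeas).abs)).aemeasurable)
      rw [Measure.restrict_apply_univ, hμQ] at h
      simpa [hsq] using h
    have habs : ENNReal.ofReal (I^2)
        ≤ (∫⁻ y in Q, ENNReal.ofReal |f x - f y| ∂padicHaarN p n)^2 := by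
      have h1 : |I| ≤ ∫ y in Q, |f x - f y| ∂padicHaarN p n := by
        simpa [Real.norm_eq_abs] using
          norm_integral_le_integral_norm (μ := (padicHaarN p n).restrict Q)
            (fun y => f x - f y)
      have h2 : I^2 ≤ (∫ y in Q, |f x - f y| ∂padicHaarN p n)^2 := by
        rw [← sq_abs]
        exact pow_le_pow_left₀ (abs_nonneg _) h1 2
      calc ENNReal.ofReal (I^2)
          ≤ ENNReal.ofReal ((∫ y in Q, |f x - f y| ∂padicHaarN p n)^2) :=
            ENNReal.ofReal_le_ofReal h2
        _ = (ENNReal.ofReal (∫ y in Q, |f x - f y| ∂padicHaarN p n))^2 :=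
            ENNReal.ofReal_pow (integral_nonneg fun y => abs_nonneg _) 2
        _ = (∫⁻ y in Q, ENNReal.ofReal |f x - f y| ∂padicHaarN p n)^2 := by
            rw [ofReal_integral_eq_lintegral_ofReal hdiff.abs
              (ae_of_all _ fun y => abs_nonneg _)]
    have hpt : ∀ y ∈ Q, ENNReal.ofReal ((f x - f y)^2)
        ≤ ENNReal.ofReal (γ ^ ((n:ℝ)+α)) *
          ENNReal.ofReal ((f x - f y)^2 / ‖x - y‖ ^ ((n:ℝ)+α)) := by
      intro y hy
      by_cases hxy : ‖x - y‖ = 0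
      · have hxey : x = y := sub_eq_zero.mp (norm_eq_zero.mp hxy)
        simp [hxey]
      · have hd : 0 < ‖x - y‖ := lt_of_le_of_ne (norm_nonneg _) (Ne.symm hxy)
        have hdγ : ‖x - y‖ ≤ γ := by
          rw [← dist_eq_norm, dist_comm]
          exact hy
        have hle : ‖x - y‖ ^ ((n:ℝ)+α) ≤ γ ^ ((n:ℝ)+α) :=
          Real.rpow_le_rpow (norm_nonneg _) hdγ he
        rw [← ENNReal.ofReal_mul (by positivity : (0:ℝ) ≤ γ ^ ((n:ℝ)+α))]
        apply ENNReal.ofReal_le_ofReal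
        have h1 : (1:ℝ) ≤ γ ^ ((n:ℝ)+α) / ‖x - y‖ ^ ((n:ℝ)+α) :=
          (one_le_div (Real.rpow_pos_of_pos hd _)).mpr hle
        calc (f x - f y)^2 = (f x - f y)^2 * 1 := (mul_one _).symm
          _ ≤ (f x - f y)^2 * (γ ^ ((n:ℝ)+α) / ‖x - y‖ ^ ((n:ℝ)+α)) :=
              mul_le_mul_of_nonneg_left h1 (sq_nonneg _)
          _ = γ ^ ((n:ℝ)+α) * ((f x - f y)^2 / ‖x - y‖ ^ ((n:ℝ)+α)) := by ring
    have hQint : ∫⁻ y in Q, ENNReal.ofReal ((f x - f y)^2) ∂padicHaarN p n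
        ≤ ENNReal.ofReal (γ ^ ((n:ℝ)+α)) *
          ∫⁻ y in Q, ENNReal.ofReal ((f x - f y)^2 / ‖x - y‖ ^ ((n:ℝ)+α)) ∂padicHaarN p n := by
      calc ∫⁻ y in Q, ENNReal.ofReal ((f x - f y)^2) ∂padicHaarN p n
          ≤ ∫⁻ y in Q, ENNReal.ofReal (γ ^ ((n:ℝ)+α)) *
              ENNReal.ofReal ((f x - f y)^2 / ‖x - y‖ ^ ((n:ℝ)+α)) ∂padicHaarN p n :=
            setLIntegral_mono' measurableSet_closedBall hpt
        _ = _ := lintegral_const_mul' _ _ ENNReal.ofReal_ne_top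
    calc ENNReal.ofReal ((f x - (γ ^ n)⁻¹ * ∫ y in Q, f y ∂padicHaarN p n) ^ 2)
        = ENNReal.ofReal (((γ^n)⁻¹)^2) * ENNReal.ofReal (I^2) := by
          rw [hI, mul_pow, ENNReal.ofReal_mul (by positivity)]
      _ ≤ ENNReal.ofReal (((γ^n)⁻¹)^2) *
            (∫⁻ y in Q, ENNReal.ofReal |f x - f y| ∂padicHaarN p n)^2 :=
          mul_le_mul_right habs _
      _ ≤ ENNReal.ofReal (((γ^n)⁻¹)^2) *
            (ENNReal.ofReal (γ^n) * ∫⁻ y in Q, ENNReal.ofReal ((f x - f y)^2) ∂padicHaarN p n) :=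
          mul_le_mul_right hCS _
      _ ≤ ENNReal.ofReal (((γ^n)⁻¹)^2) * (ENNReal.ofReal (γ^n) *
            (ENNReal.ofReal (γ ^ ((n:ℝ)+α)) *
              ∫⁻ y in Q, ENNReal.ofReal ((f x - f y)^2 / ‖x - y‖ ^ ((n:ℝ)+α)) ∂padicHaarN p n)) :=
          mul_le_mul_right (mul_le_mul_right hQint _) _
      _ ≤ ENNReal.ofReal (((γ^n)⁻¹)^2) * (ENNReal.ofReal (γ^n) *
            (ENNReal.ofReal (γ ^ ((n:ℝ)+α)) *
              ∫⁻ y in Bball p n N,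
                ENNReal.ofReal ((f x - f y)^2 / ‖x - y‖ ^ ((n:ℝ)+α)) ∂padicHaarN p n)) := by
          apply mul_le_mul_right
          apply mul_le_mul_right
          exact mul_le_mul_right (lintegral_mono_set (hQsub x hx)) _
      _ = ENNReal.ofReal (γ ^ α) *
            ∫⁻ y in Bball p n N,
              ENNReal.ofReal ((f x - f y)^2 / ‖x - y‖ ^ ((n:ℝ)+α)) ∂padicHaarN p n := by
          rw [← mul_assoc, ← mul_assoc, ← ENNReal.ofReal_mul (by positivity),
            ← ENNReal.ofReal_mul (by positivity)]
          congr 2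
          have hsplit : γ ^ ((n:ℝ)+α) = γ^n * γ^α := by
            rw [Real.rpow_add hγpos, Real.rpow_natCast]
          rw [hsplit]
          field_simp
  calc (∫⁻ x in Bball p n N,
        ENNReal.ofReal
          ((f x - (γ ^ n)⁻¹ * ∫ y in Metric.closedBall x γ, f y ∂padicHaarN p n) ^ 2)
        ∂padicHaarN p n)
      ≤ ∫⁻ x in Bball p n N, ENNReal.ofReal (γ ^ α) *
          ∫⁻ y in Bball p n N,
            ENNReal.ofReal ((f x - f y)^2 / ‖x - y‖ ^ ((n:ℝ)+α)) ∂padicHaarN p n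
          ∂padicHaarN p n := setLIntegral_mono' hΩmeas key
    _ = ENNReal.ofReal (γ ^ α) * ∫⁻ x in Bball p n N,
          ∫⁻ y in Bball p n N,
            ENNReal.ofReal ((f x - f y)^2 / ‖x - y‖ ^ ((n:ℝ)+α)) ∂padicHaarN p n
          ∂padicHaarN p n := lintegral_const_mul' _ _ ENNReal.ofReal_ne_top
    _ = ENNReal.ofReal (γ ^ α) *
        ∫⁻ z in (Bball p n N) ×ˢ (Bball p n N),
          ENNReal.ofReal ((f z.1 - f z.2) ^ 2 / ‖z.1 - z.2‖ ^ ((n : ℝ) + α))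
          ∂((padicHaarN p n).prod (padicHaarN p n)) := by
        congr 1
        rw [← Measure.prod_restrict]
        exact (lintegral_prod _ hgmeas.aemeasurable).symm
end
end

section
/- Let p be a prime, n ≥ 1, α > 0, N ∈ ℤ, Ω = B_N ⊆ ℚ_p^n, f ∈ L²(Ω), g ∈ L¹(Ω^c). Define the functional J on H^α_g(Ω) by J[u] = (c_{n,α}/4) ∬_{(K^n×K^n)∖(Ω^c×Ω^c)} |u(x)−u(y)|²/‖x−y‖^{n+α} dx dy − ∫_Ω f u dx − ∫_{Ω^c} g u dy (each term is finite for u ∈ H^α_g(Ω)). If u ∈ H^α_g(Ω) is a critical point of J, i.e. lim_{ε→0} (J[u+εv] − J[u])/ε = 0 for every v ∈ H^α_g(Ω), then u is a weak solution of the Neumann problem D^{α,n}u = f on Ω, N_α u = g on Ω^c. -/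
noncomputable section

open MeasureTheory Metric ENNReal

/-- The energy functional `J` of the Neumann problem. -/
def Jfun (p : ℕ) [Fact p.Prime] (n : ℕ) (α : ℝ) (N : ℤ)
    (f g u : (Fin n → ℚ_[p]) → ℝ) : ℝ :=
  cna p n α / 4 *
    (∫ z in ((Bball p n N)ᶜ ×ˢ (Bball p n N)ᶜ)ᶜ,
      (u z.1 - u z.2) ^ 2 / ‖z.1 - z.2‖ ^ ((n : ℝ) + α)
      ∂((padicHaarN p n).prod (padicHaarN p n)))
  - (∫ x in Bball p n N, f x * u x ∂padicHaarN p n)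
  - ∫ y in (Bball p n N)ᶜ, g y * u y ∂padicHaarN p n

private lemma abs_mul_le_half (a b : ℝ) : |a * b| ≤ (a ^ 2 + b ^ 2) / 2 := by
  rw [abs_mul]
  nlinarith [sq_nonneg (|a| - |b|), abs_nonneg a, abs_nonneg b, sq_abs a, sq_abs b]

private lemma abs_mul_div_le (a b c : ℝ) (hc : 0 ≤ c) :
    |a * b / c| ≤ (a ^ 2 / c + b ^ 2 / c) / 2 := by
  rw [div_eq_mul_inv, abs_mul, abs_inv, abs_of_nonneg hc, div_eq_mul_inv, div_eq_mul_inv]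
  have h2 : (0:ℝ) ≤ c⁻¹ := inv_nonneg.2 hc
  calc |a * b| * c⁻¹ ≤ ((a ^ 2 + b ^ 2) / 2) * c⁻¹ :=
        mul_le_mul_of_nonneg_right (abs_mul_le_half a b) h2
    _ = (a ^ 2 * c⁻¹ + b ^ 2 * c⁻¹) / 2 := by ring

private lemma abs_mul_le_half' (a b : ℝ) : |a * b| ≤ (|a| + |a| * b ^ 2) / 2 := by
  rw [abs_mul]
  have hb : |b| ≤ (1 + b ^ 2) / 2 := by nlinarith [sq_nonneg (|b| - 1), sq_abs b]
  calc |a| * |b| ≤ |a| * ((1 + b ^ 2) / 2) := mul_le_mul_of_nonneg_left hb (abs_nonneg a)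
    _ = (|a| + |a| * b ^ 2) / 2 := by ring

private lemma integrable_of_nonneg_lintegral {X : Type*} [MeasurableSpace X]
    {μ : Measure X} {h : X → ℝ} (hm : AEStronglyMeasurable h μ) (h0 : ∀ x, 0 ≤ h x)
    (hfin : (∫⁻ x, ENNReal.ofReal (h x) ∂μ) < ⊤) : Integrable h μ :=
  ⟨hm, (hasFiniteIntegral_iff_ofReal (Filter.Eventually.of_forall h0)).2 hfin⟩

private lemma crit_zero (A C : ℝ)
    (h : Filter.Tendsto (fun ε : ℝ => (ε * A + ε ^ 2 * C) / ε)
      (nhdsWithin 0 {(0 : ℝ)}ᶜ) (nhds 0)) : A = 0 := by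
  have h2 : Filter.Tendsto (fun ε : ℝ => A + ε * C) (nhdsWithin (0:ℝ) {(0:ℝ)}ᶜ) (nhds A) := by
    have h3 : Filter.Tendsto (fun ε : ℝ => A + ε * C) (nhds 0) (nhds (A + 0 * C)) :=
      (continuous_const.add (continuous_id.mul continuous_const)).tendsto 0
    simpa using h3.mono_left nhdsWithin_le_nhds
  have heq : (fun ε : ℝ => A + ε * C) =ᶠ[nhdsWithin (0:ℝ) {(0:ℝ)}ᶜ]
      fun ε : ℝ => (ε * A + ε ^ 2 * C) / ε := by
    filter_upwards [self_mem_nhdsWithin] with ε hε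
    have hε0 : ε ≠ 0 := hε
    rw [eq_div_iff hε0]; ring
  exact tendsto_nhds_unique (h2.congr' heq) h

private lemma integral_quad_expand {Z : Type*} [MeasurableSpace Z] (ν : Measure Z)
    (k a b : Z → ℝ) (ε : ℝ)
    (hIa : Integrable (fun z => a z ^ 2 / k z) ν)
    (hIb : Integrable (fun z => b z ^ 2 / k z) ν)
    (hIab : Integrable (fun z => a z * b z / k z) ν) :
    ∫ z, (a z + ε * b z) ^ 2 / k z ∂ν
      = (∫ z, a z ^ 2 / k z ∂ν) + ε * (2 * ∫ z, a z * b z / k z ∂ν)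
        + ε ^ 2 * ∫ z, b z ^ 2 / k z ∂ν := by
  have hptw : ∀ z, (a z + ε * b z) ^ 2 / k z
      = a z ^ 2 / k z + (2*ε) * (a z * b z / k z) + ε ^ 2 * (b z ^ 2 / k z) := by
    intro z
    rw [← mul_div_assoc, ← mul_div_assoc, ← add_div, ← add_div]
    congr 1; ring
  simp only [hptw]
  have h1 : Integrable (fun z => a z ^ 2 / k z + 2 * ε * (a z * b z / k z)) ν :=
    hIa.add (hIab.const_mul (2*ε))
  have h2 : Integrable (fun z => ε ^ 2 * (b z ^ 2 / k z)) ν := hIb.const_mul (ε^2)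
  have h3 : Integrable (fun z => 2 * ε * (a z * b z / k z)) ν := hIab.const_mul (2*ε)
  rw [integral_add h1 h2, integral_add hIa h3, integral_const_mul, integral_const_mul]
  ring

private lemma integral_lin_expand {Z : Type*} [MeasurableSpace Z] (ν : Measure Z)
    (w a b : Z → ℝ) (ε : ℝ)
    (hIa : Integrable (fun z => w z * a z) ν) (hIb : Integrable (fun z => w z * b z) ν) :
    ∫ z, w z * (a z + ε * b z) ∂ν = (∫ z, w z * a z ∂ν) + ε * ∫ z, w z * b z ∂ν := by
  have hptw : ∀ z, w z * (a z + ε * b z) = w z * a z + ε * (w z * b z) := fun z => by ring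
  simp only [hptw]
  have h2 : Integrable (fun z => ε * (w z * b z)) ν := hIb.const_mul ε
  rw [integral_add hIa h2, integral_const_mul]

/-- Every critical point of the functional `J` on `H^α_g(Ω)` is a weak
solution of the Neumann problem `D^{α,n}u = f` on `Ω`, `N_α u = g` on `Ω^c`. -/
theorem padic_critical_point_is_weak_solution (p : ℕ) [Fact p.Prime] (n : ℕ) (hn : 1 ≤ n)
    (α : ℝ) (hα : 0 < α) (N : ℤ)
    (f g : (Fin n → ℚ_[p]) → ℝ)
    (hfmeas : Measurable f)
    (hfL2 : (∫⁻ x in Bball p n N, ENNReal.ofReal ((f x) ^ 2) ∂padicHaarN p n) < ⊤)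
    (hgmeas : Measurable g)
    (hgL1 : IntegrableOn g (Bball p n N)ᶜ (padicHaarN p n))
    (u : (Fin n → ℚ_[p]) → ℝ) (hu : MemH p n α N g u)
    (hcrit : ∀ v : (Fin n → ℚ_[p]) → ℝ, MemH p n α N g v →
      Filter.Tendsto (fun ε : ℝ => (Jfun p n α N f g (u + ε • v) - Jfun p n α N f g u) / ε)
        (nhdsWithin 0 {(0 : ℝ)}ᶜ) (nhds 0)) :
    IsWeakSolution p n α N f g u := by
  rw [IsWeakSolution]
  refine ⟨hu, ?_⟩
  intro v hv
  have humeas : Measurable u := hu.1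
  have hvmeas : Measurable v := hv.1
  have hufin := hu.2
  have hvfin := hv.2
  rw [normSqH] at hufin hvfin
  have hu3 := (ENNReal.add_lt_top.1 hufin).2
  have hu1 := (ENNReal.add_lt_top.1 (ENNReal.add_lt_top.1 hufin).1).1
  have hu2 := (ENNReal.add_lt_top.1 (ENNReal.add_lt_top.1 hufin).1).2
  have hv3 := (ENNReal.add_lt_top.1 hvfin).2
  have hv1 := (ENNReal.add_lt_top.1 (ENNReal.add_lt_top.1 hvfin).1).1
  have hv2 := (ENNReal.add_lt_top.1 (ENNReal.add_lt_top.1 hvfin).1).2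
  -- kernel facts
  have hknn : ∀ z : (Fin n → ℚ_[p]) × (Fin n → ℚ_[p]), 0 ≤ ‖z.1 - z.2‖ ^ ((n : ℝ) + α) :=
    fun z => Real.rpow_nonneg (norm_nonneg _) _
  have hkmeas : Measurable fun z : (Fin n → ℚ_[p]) × (Fin n → ℚ_[p]) =>
      ‖z.1 - z.2‖ ^ ((n : ℝ) + α) := by
    have hc : Continuous fun z : (Fin n → ℚ_[p]) × (Fin n → ℚ_[p]) => ‖z.1 - z.2‖ :=
      (continuous_fst.sub continuous_snd).norm
    exact (hc.rpow_const (fun z => Or.inr (by positivity))).measurable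
  -- integrability of the quadratic terms
  have hIsq : ∀ w : (Fin n → ℚ_[p]) → ℝ, Measurable w →
      (∫⁻ z in ((Bball p n N)ᶜ ×ˢ (Bball p n N)ᶜ)ᶜ,
        ENNReal.ofReal ((w z.1 - w z.2) ^ 2 / ‖z.1 - z.2‖ ^ ((n : ℝ) + α))
        ∂((padicHaarN p n).prod (padicHaarN p n))) < ⊤ →
      Integrable (fun z => (w z.1 - w z.2) ^ 2 / ‖z.1 - z.2‖ ^ ((n : ℝ) + α))
        (((padicHaarN p n).prod (padicHaarN p n)).restrict
          (((Bball p n N)ᶜ ×ˢ (Bball p n N)ᶜ)ᶜ)) := by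
    intro w hw hfin
    refine integrable_of_nonneg_lintegral ?_ (fun z => div_nonneg (sq_nonneg _) (hknn z)) hfin
    exact ((((hw.comp measurable_fst).sub (hw.comp measurable_snd)).pow_const 2).div
      hkmeas).aestronglyMeasurable
  have hIu := hIsq u humeas hu3
  have hIv := hIsq v hvmeas hv3
  have hImix : Integrable
      (fun z => (u z.1 - u z.2) * (v z.1 - v z.2) / ‖z.1 - z.2‖ ^ ((n : ℝ) + α))
      (((padicHaarN p n).prod (padicHaarN p n)).restrict
        (((Bball p n N)ᶜ ×ˢ (Bball p n N)ᶜ)ᶜ)) := by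
    refine ((hIu.add hIv).div_const 2).mono'
      ((((humeas.comp measurable_fst).sub (humeas.comp measurable_snd)).mul
        ((hvmeas.comp measurable_fst).sub (hvmeas.comp measurable_snd))).div
          hkmeas).aestronglyMeasurable ?_
    filter_upwards with z
    rw [Real.norm_eq_abs]
    exact abs_mul_div_le _ _ _ (hknn z)
  -- integrability of the linear terms
  have hIw2 : ∀ w : (Fin n → ℚ_[p]) → ℝ, Measurable w →
      (∫⁻ x in Bball p n N, ENNReal.ofReal ((w x) ^ 2) ∂padicHaarN p n) < ⊤ →
      Integrable (fun x => w x ^ 2) ((padicHaarN p n).restrict (Bball p n N)) :=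
    fun w hw hfin => integrable_of_nonneg_lintegral (hw.pow_const 2).aestronglyMeasurable
      (fun x => sq_nonneg _) hfin
  have hIf2 := hIw2 f hfmeas hfL2
  have hIfw : ∀ w : (Fin n → ℚ_[p]) → ℝ, Measurable w →
      Integrable (fun x => w x ^ 2) ((padicHaarN p n).restrict (Bball p n N)) →
      Integrable (fun x => f x * w x) ((padicHaarN p n).restrict (Bball p n N)) := by
    intro w hw hInt
    refine ((hIf2.add hInt).div_const 2).mono' (hfmeas.mul hw).aestronglyMeasurable ?_
    filter_upwards with x
    rw [Real.norm_eq_abs]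
    exact abs_mul_le_half _ _
  have hIfu := hIfw u humeas (hIw2 u humeas hu1)
  have hIfv := hIfw v hvmeas (hIw2 v hvmeas hv1)
  have hIgw : ∀ w : (Fin n → ℚ_[p]) → ℝ, Measurable w →
      (∫⁻ x in (Bball p n N)ᶜ, ENNReal.ofReal (|g x| * (w x) ^ 2) ∂padicHaarN p n) < ⊤ →
      Integrable (fun x => g x * w x) ((padicHaarN p n).restrict ((Bball p n N)ᶜ)) := by
    intro w hw hfin
    have hg2 : Integrable (fun x => |g x| * w x ^ 2)
        ((padicHaarN p n).restrict ((Bball p n N)ᶜ)) :=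
      integrable_of_nonneg_lintegral (hgmeas.abs.mul (hw.pow_const 2)).aestronglyMeasurable
        (fun x => mul_nonneg (abs_nonneg _) (sq_nonneg _)) hfin
    refine ((hgL1.abs.add hg2).div_const 2).mono' (hgmeas.mul hw).aestronglyMeasurable ?_
    filter_upwards with x
    rw [Real.norm_eq_abs]
    exact abs_mul_le_half' _ _
  have hIgu := hIgw u humeas hu2
  have hIgv := hIgw v hvmeas hv2
  -- abbreviations
  set Eu := ∫ z in ((Bball p n N)ᶜ ×ˢ (Bball p n N)ᶜ)ᶜ,
      (u z.1 - u z.2) ^ 2 / ‖z.1 - z.2‖ ^ ((n : ℝ) + α)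
      ∂((padicHaarN p n).prod (padicHaarN p n)) with hEu
  set Ev := ∫ z in ((Bball p n N)ᶜ ×ˢ (Bball p n N)ᶜ)ᶜ,
      (v z.1 - v z.2) ^ 2 / ‖z.1 - z.2‖ ^ ((n : ℝ) + α)
      ∂((padicHaarN p n).prod (padicHaarN p n)) with hEv
  set B := ∫ z in ((Bball p n N)ᶜ ×ˢ (Bball p n N)ᶜ)ᶜ,
      (u z.1 - u z.2) * (v z.1 - v z.2) / ‖z.1 - z.2‖ ^ ((n : ℝ) + α)
      ∂((padicHaarN p n).prod (padicHaarN p n)) with hB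
  set Fu := ∫ x in Bball p n N, f x * u x ∂padicHaarN p n with hFu
  set Fv := ∫ x in Bball p n N, f x * v x ∂padicHaarN p n with hFv
  set Gu := ∫ y in (Bball p n N)ᶜ, g y * u y ∂padicHaarN p n with hGu
  set Gv := ∫ y in (Bball p n N)ᶜ, g y * v y ∂padicHaarN p n with hGv
  -- the key expansion
  have hkey : ∀ ε : ℝ, Jfun p n α N f g (u + ε • v) - Jfun p n α N f g u
      = ε * (cna p n α / 2 * B - Fv - Gv) + ε ^ 2 * (cna p n α / 4 * Ev) := by
    intro ε
    have e1 : (∫ z in ((Bball p n N)ᶜ ×ˢ (Bball p n N)ᶜ)ᶜ,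
        ((u + ε • v) z.1 - (u + ε • v) z.2) ^ 2 / ‖z.1 - z.2‖ ^ ((n : ℝ) + α)
        ∂((padicHaarN p n).prod (padicHaarN p n)))
        = Eu + ε * (2 * B) + ε ^ 2 * Ev := by
      have hfe : (fun z : (Fin n → ℚ_[p]) × (Fin n → ℚ_[p]) =>
          ((u + ε • v) z.1 - (u + ε • v) z.2) ^ 2 / ‖z.1 - z.2‖ ^ ((n : ℝ) + α))
          = fun z => ((u z.1 - u z.2) + ε * (v z.1 - v z.2)) ^ 2
              / ‖z.1 - z.2‖ ^ ((n : ℝ) + α) := by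
        funext z
        simp only [Pi.add_apply, Pi.smul_apply, smul_eq_mul]
        congr 1
        ring
      rw [hEu, hB, hEv]
      calc (∫ z in ((Bball p n N)ᶜ ×ˢ (Bball p n N)ᶜ)ᶜ,
            ((u + ε • v) z.1 - (u + ε • v) z.2) ^ 2 / ‖z.1 - z.2‖ ^ ((n : ℝ) + α)
            ∂((padicHaarN p n).prod (padicHaarN p n)))
          = ∫ z in ((Bball p n N)ᶜ ×ˢ (Bball p n N)ᶜ)ᶜ,
            ((u z.1 - u z.2) + ε * (v z.1 - v z.2)) ^ 2 / ‖z.1 - z.2‖ ^ ((n : ℝ) + α)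
            ∂((padicHaarN p n).prod (padicHaarN p n)) := by rw [hfe]
        _ = _ := integral_quad_expand _ _ _ _ ε hIu hIv hImix
    have e2 : (∫ x in Bball p n N, f x * (u + ε • v) x ∂padicHaarN p n) = Fu + ε * Fv := by
      have hfe : (fun x => f x * (u + ε • v) x) = fun x => f x * (u x + ε * v x) := by
        funext x; simp [Pi.add_apply]
      rw [hFu, hFv]
      calc (∫ x in Bball p n N, f x * (u + ε • v) x ∂padicHaarN p n)
          = ∫ x in Bball p n N, f x * (u x + ε * v x) ∂padicHaarN p n := by rw [hfe]
        _ = _ := integral_lin_expand _ _ _ _ ε hIfu hIfv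
    have e3 : (∫ y in (Bball p n N)ᶜ, g y * (u + ε • v) y ∂padicHaarN p n) = Gu + ε * Gv := by
      have hfe : (fun y => g y * (u + ε • v) y) = fun y => g y * (u y + ε * v y) := by
        funext y; simp [Pi.add_apply]
      rw [hGu, hGv]
      calc (∫ y in (Bball p n N)ᶜ, g y * (u + ε • v) y ∂padicHaarN p n)
          = ∫ y in (Bball p n N)ᶜ, g y * (u y + ε * v y) ∂padicHaarN p n := by rw [hfe]
        _ = _ := integral_lin_expand _ _ _ _ ε hIgu hIgv
    simp only [Jfun]
    rw [e1, e2, e3, ← hEu, ← hFu, ← hGu]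
    ring
  -- conclude from the critical-point hypothesis
  have ht := hcrit v hv
  have hfe2 : (fun ε : ℝ => (Jfun p n α N f g (u + ε • v) - Jfun p n α N f g u) / ε)
      = fun ε : ℝ => (ε * (cna p n α / 2 * B - Fv - Gv)
          + ε ^ 2 * (cna p n α / 4 * Ev)) / ε := by
    funext ε; rw [hkey ε]
  rw [hfe2] at ht
  have hA := crit_zero _ _ ht
  linarith
end
end

section
/- Let p be a prime, n ≥ 1, α > 0, N ∈ ℤ, Ω = B_N ⊆ ℚ_p^n. Let f ∈ L²(Ω) with f ≥ 0 almost everywhere on Ω and g ∈ L¹(Ω^c) with g ≥ 0 almost everywhere on Ω^c. If u ∈ H^α_g(Ω) is a weak solution of the Neumann problem D^{α,n}u = f on Ω, N_α u = g on Ω^c, then there is a constant c ∈ ℝ with u = c almost everywhere on K^n (and moreover f = 0 a.e. on Ω and g = 0 a.e. on Ω^c). -/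
noncomputable section

open MeasureTheory Metric ENNReal

instance padicHaar.sigmaFinite (p : ℕ) [Fact p.Prime] : SigmaFinite (padicHaar p) := by
  unfold padicHaar; infer_instance

instance padicHaar.isOpenPos (p : ℕ) [Fact p.Prime] : (padicHaar p).IsOpenPosMeasure := by
  unfold padicHaar; infer_instance

instance padicHaar.finCompacts (p : ℕ) [Fact p.Prime] :
    IsFiniteMeasureOnCompacts (padicHaar p) := by
  unfold padicHaar; infer_instance

instance padicHaarN.sigmaFinite (p : ℕ) [Fact p.Prime] (n : ℕ) :
    SigmaFinite (padicHaarN p n) := by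
  unfold padicHaarN; infer_instance

lemma Bball_eq_pi (p : ℕ) [Fact p.Prime] (n : ℕ) (N : ℤ) :
    Bball p n N = Set.pi Set.univ (fun _ : Fin n => Metric.closedBall (0 : ℚ_[p]) ((p : ℝ) ^ N)) := by
  have hp : (0 : ℝ) < (p : ℝ) ^ N := by
    have : (0:ℝ) < (p:ℝ) := by exact_mod_cast (Fact.out : p.Prime).pos
    positivity
  ext x
  simp only [Bball, Set.mem_setOf_eq, Set.mem_pi, Set.mem_univ, forall_true_left,
    Metric.mem_closedBall, dist_zero_right]
  exact pi_norm_le_iff_of_nonneg hp.le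

lemma Bball_measure_lt_top (p : ℕ) [Fact p.Prime] (n : ℕ) (N : ℤ) :
    padicHaarN p n (Bball p n N) < ⊤ := by
  rw [Bball_eq_pi, padicHaarN, Measure.pi_pi]
  refine ENNReal.prod_lt_top fun i _ => ?_
  exact (IsCompact.measure_lt_top (μ := padicHaar p) (isCompact_closedBall 0 ((p:ℝ)^N)))

lemma Bball_measure_pos (p : ℕ) [Fact p.Prime] (n : ℕ) (N : ℤ) :
    0 < padicHaarN p n (Bball p n N) := by
  rw [Bball_eq_pi, padicHaarN, Measure.pi_pi]
  refine CanonicallyOrderedAdd.prod_pos.2 fun i _ => ?_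
  have hp : (0 : ℝ) < (p : ℝ) ^ N := by
    have : (0:ℝ) < (p:ℝ) := by exact_mod_cast (Fact.out : p.Prime).pos
    positivity
  exact lt_of_lt_of_le (measure_ball_pos _ 0 hp) (measure_mono Metric.ball_subset_closedBall)

lemma Bball_measurableSet (p : ℕ) [Fact p.Prime] (n : ℕ) (N : ℤ) :
    MeasurableSet (Bball p n N) :=
  (isClosed_le continuous_norm continuous_const).measurableSet

lemma cna_pos (p n : ℕ) [Fact p.Prime] (hn : 1 ≤ n) {α : ℝ} (hα : 0 < α) : 0 < cna p n α := by
  have hp1 : (1 : ℝ) < (p : ℝ) := by exact_mod_cast (Fact.out : p.Prime).one_lt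
  have hnum : (1 : ℝ) < (p : ℝ) ^ α :=
    (Real.one_lt_rpow_iff_of_pos (lt_trans one_pos hp1)).2 (Or.inl ⟨hp1, hα⟩)
  have hden : (p : ℝ) ^ (-α - (n : ℝ)) < 1 := by
    refine Real.rpow_lt_one_of_one_lt_of_neg hp1 ?_
    have : (0:ℝ) < (n:ℝ) := by exact_mod_cast Nat.lt_of_lt_of_le Nat.zero_lt_one hn
    linarith
  exact div_pos (by linarith) (by linarith)

lemma abs_le_sq_add_one (t : ℝ) : |t| ≤ t ^ 2 + 1 := by
  nlinarith [sq_nonneg (|t| - 1), sq_abs t, abs_nonneg t]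

/-- Maximum principle: if `f ≥ 0` a.e. on `Ω`, `g ≥ 0` a.e. on `Ω^c`
and `u ∈ H^α_g(Ω)` is a weak solution of the Neumann problem, then `u` is a.e. constant
on `K^n` (and `f = 0` a.e. on `Ω`, `g = 0` a.e. on `Ω^c`). -/
theorem padic_neumann_maximum_principle (p : ℕ) [Fact p.Prime] (n : ℕ) (hn : 1 ≤ n)
    (α : ℝ) (hα : 0 < α) (N : ℤ)
    (f g : (Fin n → ℚ_[p]) → ℝ)
    (hfmeas : Measurable f)
    (hfL2 : (∫⁻ x in Bball p n N, ENNReal.ofReal ((f x) ^ 2) ∂padicHaarN p n) < ⊤)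
    (hfpos : ∀ᵐ x ∂(padicHaarN p n).restrict (Bball p n N), 0 ≤ f x)
    (hgmeas : Measurable g)
    (hgL1 : IntegrableOn g (Bball p n N)ᶜ (padicHaarN p n))
    (hgpos : ∀ᵐ y ∂(padicHaarN p n).restrict (Bball p n N)ᶜ, 0 ≤ g y)
    (u : (Fin n → ℚ_[p]) → ℝ)
    (hu : IsWeakSolution p n α N f g u) :
    (∃ c : ℝ, ∀ᵐ x ∂padicHaarN p n, u x = c) ∧
    (∀ᵐ x ∂(padicHaarN p n).restrict (Bball p n N), f x = 0) ∧
    (∀ᵐ y ∂(padicHaarN p n).restrict (Bball p n N)ᶜ, g y = 0) := by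
  classical
  set μ := padicHaarN p n with hμdef
  set Ω := Bball p n N with hΩdef
  have hΩm : MeasurableSet Ω := Bball_measurableSet p n N
  have hΩfin : μ Ω < ⊤ := Bball_measure_lt_top p n N
  have hΩpos : 0 < μ Ω := Bball_measure_pos p n N
  obtain ⟨⟨humeas, hunorm⟩, hweak⟩ := hu
  -- Step 1: test function v = 1
  have hone : MemH p n α N g (fun _ => (1:ℝ)) := by
    refine ⟨measurable_const, ?_⟩
    unfold normSqH
    have h1 : (∫⁻ x in Ω, ENNReal.ofReal ((1:ℝ) ^ 2) ∂μ) = μ Ω := by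
      simp [setLIntegral_const]
    have h2 : (∫⁻ x in Ωᶜ, ENNReal.ofReal (|g x| * (1:ℝ) ^ 2) ∂μ)
        = ∫⁻ x in Ωᶜ, (‖g x‖₊ : ℝ≥0∞) ∂μ := by
      refine lintegral_congr fun x => ?_
      rw [one_pow, mul_one, ← Real.norm_eq_abs, ofReal_norm, enorm_eq_nnnorm]
    have h3 : (∫⁻ z in (Ωᶜ ×ˢ Ωᶜ)ᶜ,
        ENNReal.ofReal (((1:ℝ) - 1) ^ 2 / ‖z.1 - z.2‖ ^ ((n : ℝ) + α)) ∂μ.prod μ) = 0 := by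
      simp
    rw [h1, h2, h3, add_zero]
    have hg2 : (∫⁻ x in Ωᶜ, (‖g x‖₊ : ℝ≥0∞) ∂μ) < ⊤ := hgL1.2
    exact ENNReal.add_lt_top.2 ⟨hΩfin, hg2⟩
  have heq1 := hweak (fun _ => (1:ℝ)) hone
  simp only [sub_self, mul_zero, zero_div, integral_zero, mul_one] at heq1
  -- f is integrable on Ω
  have hfint : IntegrableOn f Ω μ := by
    refine ⟨hfmeas.aestronglyMeasurable, ?_⟩
    rw [hasFiniteIntegral_iff_norm]
    have hb : ∀ x, ENNReal.ofReal ‖f x‖ ≤ ENNReal.ofReal ((f x) ^ 2) + 1 := fun x => by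
      rw [Real.norm_eq_abs]
      calc ENNReal.ofReal |f x| ≤ ENNReal.ofReal (f x ^ 2 + 1) :=
            ENNReal.ofReal_le_ofReal (abs_le_sq_add_one _)
        _ = ENNReal.ofReal (f x ^ 2) + 1 := by
            rw [ENNReal.ofReal_add (sq_nonneg _) zero_le_one, ENNReal.ofReal_one]
    calc (∫⁻ x in Ω, ENNReal.ofReal ‖f x‖ ∂μ)
        ≤ ∫⁻ x in Ω, (ENNReal.ofReal ((f x) ^ 2) + 1) ∂μ := lintegral_mono hb
      _ = (∫⁻ x in Ω, ENNReal.ofReal ((f x) ^ 2) ∂μ) + μ Ω := by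
          rw [lintegral_add_right _ measurable_const, setLIntegral_const, one_mul]
      _ < ⊤ := ENNReal.add_lt_top.2 ⟨hfL2, hΩfin⟩
  have hfI : (0:ℝ) ≤ ∫ x in Ω, f x ∂μ := integral_nonneg_of_ae hfpos
  have hgI : (0:ℝ) ≤ ∫ y in Ωᶜ, g y ∂μ := integral_nonneg_of_ae hgpos
  have hfI0 : (∫ x in Ω, f x ∂μ) = 0 := by linarith
  have hgI0 : (∫ y in Ωᶜ, g y ∂μ) = 0 := by linarith
  have hf0 : ∀ᵐ x ∂μ.restrict Ω, f x = 0 := by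
    have := (integral_eq_zero_iff_of_nonneg_ae hfpos hfint).1 hfI0
    filter_upwards [this] with x hx using hx
  have hg0 : ∀ᵐ y ∂μ.restrict Ωᶜ, g y = 0 := by
    have := (integral_eq_zero_iff_of_nonneg_ae hgpos hgL1).1 hgI0
    filter_upwards [this] with x hx using hx
  refine ⟨?_, hf0, hg0⟩
  -- Step 2: test function v = u
  have heq2 := hweak u ⟨humeas, hunorm⟩
  have hr1 : (∫ x in Ω, f x * u x ∂μ) = 0 := by
    refine integral_eq_zero_of_ae ?_
    filter_upwards [hf0] with x hx
    simp [hx]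
  have hr2 : (∫ y in Ωᶜ, g y * u y ∂μ) = 0 := by
    refine integral_eq_zero_of_ae ?_
    filter_upwards [hg0] with x hx
    simp [hx]
  rw [hr1, hr2, add_zero] at heq2
  have hcn : 0 < cna p n α := cna_pos p n hn hα
  have hI : (∫ z in (Ωᶜ ×ˢ Ωᶜ)ᶜ,
      (u z.1 - u z.2) * (u z.1 - u z.2) / ‖z.1 - z.2‖ ^ ((n : ℝ) + α) ∂μ.prod μ) = 0 :=
    (mul_eq_zero.1 heq2).resolve_left (by positivity)
  set A := (Ωᶜ ×ˢ Ωᶜ)ᶜ with hAdef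
  have hAm : MeasurableSet A := ((hΩm.compl.prod hΩm.compl)).compl
  set h : ((Fin n → ℚ_[p]) × (Fin n → ℚ_[p])) → ℝ :=
    fun z => (u z.1 - u z.2) * (u z.1 - u z.2) / ‖z.1 - z.2‖ ^ ((n : ℝ) + α) with hhdef
  have hnonneg : ∀ z, 0 ≤ h z := fun z =>
    div_nonneg (mul_self_nonneg _) (Real.rpow_nonneg (norm_nonneg _) _)
  have hm : Measurable h := by
    apply Measurable.div
    · exact ((humeas.comp measurable_fst).sub (humeas.comp measurable_snd)).mul
        ((humeas.comp measurable_fst).sub (humeas.comp measurable_snd))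
    · have hβ : (0:ℝ) ≤ (n : ℝ) + α := by positivity
      exact (Real.continuous_rpow_const hβ).measurable.comp
        ((measurable_fst.sub measurable_snd).norm)
  have hfin3 : (∫⁻ z in A,
      ENNReal.ofReal ((u z.1 - u z.2) ^ 2 / ‖z.1 - z.2‖ ^ ((n : ℝ) + α)) ∂μ.prod μ) < ⊤ :=
    lt_of_le_of_lt le_add_self hunorm
  have hint : IntegrableOn h A (μ.prod μ) := by
    refine ⟨hm.aestronglyMeasurable, ?_⟩
    rw [hasFiniteIntegral_iff_norm]
    have : ∀ z, ENNReal.ofReal ‖h z‖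
        = ENNReal.ofReal ((u z.1 - u z.2) ^ 2 / ‖z.1 - z.2‖ ^ ((n : ℝ) + α)) := fun z => by
      rw [Real.norm_eq_abs, abs_of_nonneg (hnonneg z), hhdef]
      ring_nf
    calc (∫⁻ z in A, ENNReal.ofReal ‖h z‖ ∂μ.prod μ)
        = ∫⁻ z in A,
            ENNReal.ofReal ((u z.1 - u z.2) ^ 2 / ‖z.1 - z.2‖ ^ ((n : ℝ) + α)) ∂μ.prod μ :=
          lintegral_congr fun z => this z
      _ < ⊤ := hfin3
  have hzero : h =ᵐ[(μ.prod μ).restrict A] 0 :=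
    (integral_eq_zero_iff_of_nonneg_ae (Filter.Eventually.of_forall hnonneg) hint).1 hI
  have hP : ∀ᵐ z ∂(μ.prod μ).restrict A, u z.1 = u z.2 := by
    filter_upwards [hzero] with z hz
    by_cases hzz : z.1 = z.2
    · rw [hzz]
    · have hnorm : 0 < ‖z.1 - z.2‖ := by rwa [norm_pos_iff, sub_ne_zero]
      have hpow : 0 < ‖z.1 - z.2‖ ^ ((n : ℝ) + α) := Real.rpow_pos_of_pos hnorm _
      have hz' : (u z.1 - u z.2) * (u z.1 - u z.2) / ‖z.1 - z.2‖ ^ ((n : ℝ) + α) = 0 := hz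
      rcases div_eq_zero_iff.1 hz' with h' | h'
      · exact sub_eq_zero.1 (mul_self_eq_zero.1 h')
      · exact absurd h' hpow.ne'
  have hsub : Ω ×ˢ (Set.univ : Set (Fin n → ℚ_[p])) ⊆ A := by
    rintro ⟨x, y⟩ ⟨hx, -⟩ hcon
    exact hcon.1 hx
  have h1 : ∀ᵐ z ∂μ.prod μ, z ∈ A → u z.1 = u z.2 := (ae_restrict_iff' hAm).1 hP
  have h2 : ∀ᵐ z ∂(μ.prod μ).restrict (Ω ×ˢ (Set.univ : Set (Fin n → ℚ_[p]))),
      u z.1 = u z.2 :=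
    (ae_restrict_iff' (hΩm.prod MeasurableSet.univ)).2
      (h1.mono fun z hz hmem => hz (hsub hmem))
  rw [← Measure.restrict_prod_eq_prod_univ] at h2
  have h3 := Measure.ae_ae_of_ae_prod h2
  have hne : μ.restrict Ω ≠ 0 := by
    rw [Ne, Measure.restrict_eq_zero]
    exact hΩpos.ne'
  haveI : (ae (μ.restrict Ω)).NeBot := ae_neBot.2 hne
  obtain ⟨x₀, hx₀⟩ := h3.exists
  exact ⟨u x₀, hx₀.mono fun y hy => hy.symm⟩
end
end
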